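/- arXiv:2507.11122 — 7 statements merged into one kernel-verified Lean document; each statement's English description precedes it below -/
import Mathlib

section
/- An order-decreasing full transformation α on {1,...,n} is idempotent if and only if min(aα⁻¹) = a for every a in the image of α. -/
open Finset

namespace ORDPaper

/-- `f` is a full transformation of the chain `{1,…,n}`, acting as the identity outside. -/
def IsTrans (n : ℕ) (f : ℕ → ℕ) : Prop :=
  (∀ x, 1 ≤ x → x ≤ n → 1 ≤ f x ∧ f x ≤ n) ∧ ∀ x, ¬(1 ≤ x ∧ x ≤ n) → f x = x

/-- Composition of transformations, written left to right: `x(αβ) = (xα)β`. -/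
def comp (f g : ℕ → ℕ) : ℕ → ℕ := fun x => g (f x)

/-- The value of `f` at the cyclic successor of `i` (so `(n+1)α = 1α`). -/
def nxt (n : ℕ) (f : ℕ → ℕ) (i : ℕ) : ℕ := if i = n then f 1 else f (i + 1)

/-- `(1α,…,nα)` is cyclic: there is at most one descent (cyclically). -/
def Cyclic (n : ℕ) (f : ℕ → ℕ) : Prop :=
  ((Finset.Icc 1 n).filter (fun i => nxt n f i < f i)).card ≤ 1

/-- `(1α,…,nα)` is anti-cyclic: there is at most one ascent (cyclically). -/
def AntiCyclic (n : ℕ) (f : ℕ → ℕ) : Prop :=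
  ((Finset.Icc 1 n).filter (fun i => f i < nxt n f i)).card ≤ 1

/-- Order-decreasing on `{1,…,n}`. -/
def Decreasing (n : ℕ) (f : ℕ → ℕ) : Prop := ∀ x, 1 ≤ x → x ≤ n → f x ≤ x

/-- Image of `{1,…,n}` under `f`. -/
def im (n : ℕ) (f : ℕ → ℕ) : Finset ℕ := (Finset.Icc 1 n).image f

/-- Fixed points of `f` in `{1,…,n}`. -/
def fixSet (n : ℕ) (f : ℕ → ℕ) : Finset ℕ := (Finset.Icc 1 n).filter (fun x => f x = x)

/-- The semigroup `D_n` of order-decreasing full transformations. -/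
def Dn (n : ℕ) : Set (ℕ → ℕ) := {f | IsTrans n f ∧ Decreasing n f}

/-- Orientation-preserving order-decreasing transformations. -/
def OPD (n : ℕ) : Set (ℕ → ℕ) := {f | f ∈ Dn n ∧ Cyclic n f}

/-- Oriented order-decreasing transformations. -/
def ORDn (n : ℕ) : Set (ℕ → ℕ) := {f | f ∈ Dn n ∧ (Cyclic n f ∨ AntiCyclic n f)}

/-- `RD*_n`: orientation-reversing, order-decreasing, not orientation-preserving. -/
def RDstar (n : ℕ) : Set (ℕ → ℕ) := {f | f ∈ Dn n ∧ AntiCyclic n f ∧ ¬ Cyclic n f}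

/-- `ORD(n,r)`. -/
def ORDr (n r : ℕ) : Set (ℕ → ℕ) := {f | f ∈ ORDn n ∧ (im n f).card ≤ r}

/-- `OPD(n,r)`. -/
def OPDr (n r : ℕ) : Set (ℕ → ℕ) := {f | f ∈ OPD n ∧ (im n f).card ≤ r}

/-- The order-reversing degree: `min(X_n \ 1α⁻¹)`. -/
noncomputable def ordDeg (n : ℕ) (f : ℕ → ℕ) : ℕ := sInf {x | 1 ≤ x ∧ x ≤ n ∧ f x ≠ 1}

/-- Minimum of the preimage of `x` under `f` inside `{1,…,n}`. -/
noncomputable def preMin (n : ℕ) (f : ℕ → ℕ) (x : ℕ) : ℕ := sInf {y | 1 ≤ y ∧ y ≤ n ∧ f y = x}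

/-- Membership in the subsemigroup generated by `A`. -/
inductive gen (A : Set (ℕ → ℕ)) : (ℕ → ℕ) → Prop
  | base {f} : f ∈ A → gen A f
  | mul {f g} : gen A f → gen A g → gen A (comp f g)

/-- Rank of a transformation semigroup `S`. -/
noncomputable def rank (S : Set (ℕ → ℕ)) : ℕ :=
  sInf {k | ∃ A : Set (ℕ → ℕ), A ⊆ S ∧ A.Finite ∧ A.ncard = k ∧ {f | gen A f} = S}

/-- `r̂ = min{r, ⌈(n+1)/2⌉}`. -/
def rhat (n r : ℕ) : ℕ := min r ((n + 2) / 2)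

/-- `ρ_m` fixes `1,…,m` and sends `m+1,…,n` to `1`. -/
def rho (n m : ℕ) : ℕ → ℕ := fun x =>
  if ¬(1 ≤ x ∧ x ≤ n) then x else if x ≤ m then x else 1

/-- The order-preserving degree `opd(α) = max{m : α|_{X_m} is order-preserving}`. -/
noncomputable def opd (n : ℕ) (f : ℕ → ℕ) : ℕ :=
  sSup {m | m ≤ n ∧ ∀ x y, 1 ≤ x → x ≤ y → y ≤ m → f x ≤ f y}

/-- The set `C = (⋃_{m=r+1}^n B_m) ∪ {ρ_2,…,ρ_r}`. -/
def Cset (n r : ℕ) : Set (ℕ → ℕ) :=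
  {f | (f ∈ OPD n ∧ comp f f = f ∧ (im n f).card = r ∧ r + 1 ≤ opd n f ∧ opd n f ≤ n)
    ∨ (∃ m, 2 ≤ m ∧ m ≤ r ∧ f = rho n m)}

/-- The map `λ_{m,r}`: sends `[1,m-1]` to `1`, maps `x ∈ [m, min(2m-p-2,n)]` to `2m-x`
(where `p = max{0, m-r}` is `m - r` in truncated subtraction), and the rest of `[1,n]` to `1`. -/
def lam (n r m : ℕ) : ℕ → ℕ := fun x =>
  if ¬(1 ≤ x ∧ x ≤ n) then x
  else if x < m then 1
  else if x ≤ min (2 * m - (m - r) - 2) n then 2 * m - x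
  else 1

/-- `G_{n,r} = {λ_{m,r} : 3 ≤ m ≤ n-1}`. -/
def Gset (n r : ℕ) : Set (ℕ → ℕ) := {f | ∃ m, 3 ≤ m ∧ m ≤ n - 1 ∧ f = lam n r m}

/-- `L_{m,r}`. -/
def Lset (n r m : ℕ) : Set (ℕ → ℕ) :=
  {f | f ∈ ORDn n ∧ im n f = im n (lam n r m) ∧
    ∀ x ∈ im n (lam n r m), preMin n f x = preMin n (lam n r m) x}

/-- `α_{m,r}`: the idempotent fixing `{1} ∪ [m, 2m-p-2]` and sending the rest of `[1,n]` to `1`. -/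
def alphaMap (n r m : ℕ) : ℕ → ℕ := fun x =>
  if ¬(1 ≤ x ∧ x ≤ n) then x
  else if x < m then 1
  else if x ≤ 2 * m - (m - r) - 2 then x
  else 1

/-- `β_{m,r}`: sends `[1,m-1]` to `1`, maps `m,…,2m-p-3` order-reversingly to `m,…,p+3`,
and `[2m-p-2, n]` to `p+2`. -/
def betaMap (n r m : ℕ) : ℕ → ℕ := fun x =>
  if ¬(1 ≤ x ∧ x ≤ n) then x
  else if x < m then 1
  else if x ≤ 2 * m - (m - r) - 3 then 2 * m - x
  else (m - r) + 2

/-- `S` is a subsemigroup of `T`. -/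
def IsSubsemigroupOf (S T : Set (ℕ → ℕ)) : Prop :=
  S ⊆ T ∧ ∀ f ∈ S, ∀ g ∈ S, comp f g ∈ S

/-- `S` is a maximal subsemigroup of `T`. -/
def IsMaximalSubsemigroupOf (S T : Set (ℕ → ℕ)) : Prop :=
  IsSubsemigroupOf S T ∧ S ≠ T ∧ ∀ U, IsSubsemigroupOf U T → S ⊆ U → U = S ∨ U = T


theorem decreasing_idempotent_iff_min_preimage (n : ℕ) (f : ℕ → ℕ) (hf : f ∈ Dn n) :
    comp f f = f ↔ ∀ a ∈ im n f, preMin n f a = a := by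
  obtain ⟨⟨hmap, hout⟩, hdec⟩ := hf
  constructor
  · intro hid a ha
    simp only [im, Finset.mem_image, Finset.mem_Icc] at ha
    obtain ⟨x, ⟨hx1, hxn⟩, rfl⟩ := ha
    have hfa := (hmap x hx1 hxn)
    have hfix : f (f x) = f x := congrFun hid x
    rw [preMin]
    apply le_antisymm
    · refine Nat.sInf_le ?_
      exact ⟨hfa.1, hfa.2, hfix⟩
    · apply le_csInf (⟨f x, hfa.1, hfa.2, hfix⟩ : Set.Nonempty {y | 1 ≤ y ∧ y ≤ n ∧ f y = f x})
      rintro y ⟨hy1, hyn, hfy⟩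
      calc f x = f y := hfy.symm
        _ ≤ y := hdec y hy1 hyn
  · intro h
    funext x
    by_cases hx : 1 ≤ x ∧ x ≤ n
    · have ha : f x ∈ im n f := by
        simp only [im, Finset.mem_image, Finset.mem_Icc]
        exact ⟨x, hx, rfl⟩
      have hmin := h (f x) ha
      have hne : {y | 1 ≤ y ∧ y ≤ n ∧ f y = f x}.Nonempty := ⟨x, hx.1, hx.2, rfl⟩
      have := Nat.sInf_mem hne
      rw [preMin] at hmin
      rw [hmin] at this
      exact this.2.2
    · show f (f x) = f x
      simp [hout x hx]

end ORDPaper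
end

section
/- Let α be an orientation-reversing, order-decreasing full transformation on {1,...,n} that is not orientation-preserving, and let m = min({1,...,n} \ 1α⁻¹) be its order-reversing degree. Then 3 ≤ m ≤ n−1, xα = 1 for all x < m, the restriction of α to [m,n] is order-reversing with 1 ≤ nα ≤ ... ≤ (m+1)α ≤ mα ≤ m and mα ≥ 3, and fix(α) ⊆ {1, m}. -/
open Finset

namespace ORDPaper

/-- If `f` sends `[1,m)` to `1`, is weakly order-reversing on `[m,n]`, and `f m ≤ 2`
(when `m < n`), then the sequence of values is cyclic. -/
lemma key_cyclic (n m : ℕ) (f : ℕ → ℕ)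
    (htr : ∀ x, 1 ≤ x → x ≤ n → 1 ≤ f x ∧ f x ≤ n)
    (hlow : ∀ x, 1 ≤ x → x ≤ n → x < m → f x = 1)
    (hanti : ∀ x y, m ≤ x → x ≤ y → y ≤ n → f y ≤ f x)
    (hfm : m < n → f m ≤ 2) :
    Cyclic n f := by
  refine Finset.card_le_one.mpr ?_
  intro a ha b hb
  simp only [Finset.mem_filter, Finset.mem_Icc] at ha hb
  obtain ⟨⟨ha1, han⟩, hda⟩ := ha
  obtain ⟨⟨hb1, hbn⟩, hdb⟩ := hb
  have hnxt : ∀ c, 1 ≤ c → c ≤ n → 1 ≤ nxt n f c := by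
    intro c h1 h2
    unfold nxt
    split
    · exact (htr 1 le_rfl (le_trans h1 h2)).1
    · exact (htr (c+1) (by omega) (by omega)).1
  have hfc2 : ∀ c, 1 ≤ c → c ≤ n → nxt n f c < f c → 2 ≤ f c := by
    intro c h1 h2 hd
    have := hnxt c h1 h2
    omega
  have hmc : ∀ c, 1 ≤ c → c ≤ n → nxt n f c < f c → m ≤ c := by
    intro c h1 h2 hd
    by_contra h
    have h1' := hlow c h1 h2 (by omega)
    have h2' := hfc2 c h1 h2 hd
    omega
  have main : ∀ c d, 1 ≤ c → c ≤ n → nxt n f c < f c → 1 ≤ d → d ≤ n →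
      nxt n f d < f d → c < d → False := by
    intro c d hc1 hcn hdc hd1 hdn hdd hcd
    have hmcc := hmc c hc1 hcn hdc
    have hmn : m < n := by omega
    have hfc : f c ≤ 2 := le_trans (hanti m c le_rfl hmcc hcn) (hfm hmn)
    have hnx : nxt n f c = f (c+1) := by unfold nxt; exact if_neg (by omega)
    rw [hnx] at hdc
    have hge : 1 ≤ f (c+1) := (htr (c+1) (by omega) (by omega)).1
    have h2 : f d ≤ f (c+1) := hanti (c+1) d (by omega) (by omega) hdn
    have h3 := hfc2 d hd1 hdn hdd
    omega
  rcases lt_trichotomy a b with h | h | h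
  · exact (main a b ha1 han hda hb1 hbn hdb h).elim
  · exact h
  · exact (main b a hb1 hbn hdb ha1 han hda h).elim

/-- If `f` is anti-cyclic and has an ascent at `k < n`, then `f` is weakly
decreasing on `(k, n]`. -/
lemma antitone_of_ascent (n k : ℕ) (f : ℕ → ℕ) (hA : AntiCyclic n f)
    (hk1 : 1 ≤ k) (hkn : k ≤ n) (hasc : f k < nxt n f k) :
    ∀ x y, k < x → x ≤ y → y ≤ n → f y ≤ f x := by
  have huniq : ∀ i, 1 ≤ i → i ≤ n → i ≠ k → ¬ (f i < nxt n f i) := by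
    intro i h1 h2 hik hlt
    have h2c : 1 < ((Finset.Icc 1 n).filter (fun i => f i < nxt n f i)).card := by
      refine Finset.one_lt_card.mpr ?_
      refine ⟨i, Finset.mem_filter.mpr ⟨Finset.mem_Icc.mpr ⟨h1, h2⟩, hlt⟩,
        k, Finset.mem_filter.mpr ⟨Finset.mem_Icc.mpr ⟨hk1, hkn⟩, hasc⟩, hik⟩
    exact absurd hA (not_le.mpr h2c)
  intro x y hx hxy
  induction y, hxy using Nat.le_induction with
  | base => intro _; exact le_rfl
  | succ y hxy ih =>
    intro hyn
    have hyn' : y ≤ n := by omega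
    have h1 : f y ≤ f x := ih hyn'
    have hnasc := huniq y (by omega) hyn' (by omega)
    have he : nxt n f y = f (y+1) := by unfold nxt; exact if_neg (by omega)
    rw [he] at hnasc
    omega

theorem rdstar_tabular_form (n : ℕ) (hn : 4 ≤ n) (f : ℕ → ℕ) (hf : f ∈ RDstar n)
    (m : ℕ) (hm : m = ordDeg n f) :
    3 ≤ m ∧ m ≤ n - 1 ∧
    (∀ x, 1 ≤ x → x < m → f x = 1) ∧
    (∀ x y, m ≤ x → x ≤ y → y ≤ n → f y ≤ f x) ∧
    1 ≤ f n ∧ f m ≤ m ∧ 3 ≤ f m ∧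
    (∀ x, 1 ≤ x → x ≤ n → f x = x → x = 1 ∨ x = m) := by
  obtain ⟨⟨⟨htr, hout⟩, hdec⟩, hA, hnotC⟩ := hf
  have hn1 : 1 ≤ n := by omega
  have hf1 : f 1 = 1 := le_antisymm (hdec 1 le_rfl hn1) (htr 1 le_rfl hn1).1
  have hne : ({x | 1 ≤ x ∧ x ≤ n ∧ f x ≠ 1} : Set ℕ).Nonempty := by
    by_contra h
    have hall : ∀ x, 1 ≤ x → x ≤ n → f x = 1 := by
      intro x h1 h2
      by_contra hx
      exact h ⟨x, h1, h2, hx⟩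
    exact hnotC (key_cyclic n (n+1) f htr (fun x h1 h2 _ => hall x h1 h2)
      (fun x y hx hxy hyn => by omega) (by omega))
  have hmS : 1 ≤ m ∧ m ≤ n ∧ f m ≠ 1 := by rw [hm]; exact Nat.sInf_mem hne
  obtain ⟨hm1, hmn', hfm1⟩ := hmS
  have hmin : ∀ x, 1 ≤ x → x ≤ n → x < m → f x = 1 := by
    intro x h1 h2 h3
    by_contra hx
    have hle : m ≤ x := by rw [hm]; exact Nat.sInf_le ⟨h1, h2, hx⟩
    omega
  have h2m : 2 ≤ m := by
    have : m ≠ 1 := fun e => hfm1 (e ▸ hf1)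
    omega
  have hfm2 : 2 ≤ f m := by
    have := (htr m hm1 hmn').1
    omega
  have hmn : m ≠ n := by
    intro e
    apply hnotC
    refine key_cyclic n n f htr (fun x h1 h2 h3 => hmin x h1 h2 (by omega)) ?_ (by omega)
    intro x y hx hxy hyn
    have hxy' : x = y := by omega
    rw [hxy']
  have hasc : f (m-1) < nxt n f (m-1) := by
    have e : nxt n f (m-1) = f m := by
      unfold nxt
      rw [if_neg (by omega)]
      congr 1
      omega
    rw [e, hmin (m-1) (by omega) (by omega) (by omega)]
    omega
  have hantiton := antitone_of_ascent n (m-1) f hA (by omega) (by omega) hasc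
  have hanti' : ∀ x y, m ≤ x → x ≤ y → y ≤ n → f y ≤ f x :=
    fun x y hx hxy hyn => hantiton x y (by omega) hxy hyn
  have hfm3 : 3 ≤ f m := by
    by_contra h
    exact hnotC (key_cyclic n m f htr hmin hanti' (fun _ => by omega))
  have hfmm : f m ≤ m := hdec m hm1 hmn'
  refine ⟨by omega, by omega, ?_, hanti', (htr n hn1 le_rfl).1, hfmm, hfm3, ?_⟩
  · intro x h1 h2
    exact hmin x h1 (by omega) h2
  · intro x h1 h2 hfx
    by_contra hc
    push_neg at hc
    rcases lt_trichotomy x m with h | h | h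
    · have := hmin x h1 h2 h
      omega
    · omega
    · have := hanti' m x le_rfl (by omega) h2
      omega

end ORDPaper
end

section
/- Let α ∈ RD*_n with |im(α)| = r and order-reversing degree m = min({1,...,n} \ 1α⁻¹). Then r ≤ min{m, ⌈(n+1)/2⌉}. -/
open Finset

namespace ORDPaper

theorem rdstar_rank_le_min (n : ℕ) (hn : 4 ≤ n) (f : ℕ → ℕ) (hf : f ∈ RDstar n) :
    (im n f).card ≤ min (ordDeg n f) ((n + 2) / 2) := by
  obtain ⟨⟨⟨hmap, hout⟩, hdec⟩, hanti, hnc⟩ := hf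
  have hn1 : 1 ≤ n := by omega
  have hf1 : f 1 = 1 := le_antisymm (hdec 1 le_rfl hn1) (hmap 1 le_rfl hn1).1
  set S : Set ℕ := {x | 1 ≤ x ∧ x ≤ n ∧ f x ≠ 1} with hS
  have hSne : S.Nonempty := by
    by_contra h
    apply hnc
    have hall : ∀ x, 1 ≤ x → x ≤ n → f x = 1 := by
      intro x hx1 hxn
      by_contra hne
      exact h ⟨x, hx1, hxn, hne⟩
    unfold Cyclic
    have hempty : ((Finset.Icc 1 n).filter (fun i => nxt n f i < f i)) = ∅ := by
      apply Finset.filter_eq_empty_iff.mpr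
      intro i hi
      simp only [Finset.mem_Icc] at hi
      have h1 : f i = 1 := hall i hi.1 hi.2
      have h2 : nxt n f i = 1 := by
        unfold nxt
        split
        · exact hf1
        · exact hall (i + 1) (by omega) (by omega)
      omega
    rw [hempty]
    simp
  set m := sInf S with hm
  have hmS : m ∈ S := Nat.sInf_mem hSne
  obtain ⟨hm1, hmn, hfm⟩ := hmS
  have hfm1 : 1 ≤ f m := (hmap m hm1 hmn).1
  have hm2 : 2 ≤ m := by
    have : m ≠ 1 := fun h => hfm (h ▸ hf1)
    omega
  have hsmall : ∀ x, 1 ≤ x → x < m → f x = 1 := by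
    intro x hx1 hxm
    by_contra hne
    have : m ≤ x := Nat.sInf_le ⟨hx1, by omega, hne⟩
    omega
  have hasc : (m - 1) ∈ (Finset.Icc 1 n).filter (fun i => f i < nxt n f i) := by
    simp only [Finset.mem_filter, Finset.mem_Icc]
    refine ⟨⟨by omega, by omega⟩, ?_⟩
    have h1 : f (m - 1) = 1 := hsmall (m - 1) (by omega) (by omega)
    have h2 : nxt n f (m - 1) = f m := by
      unfold nxt
      rw [if_neg (by omega)]
      have : m - 1 + 1 = m := by omega
      rw [this]
    omega
  have huniq : ∀ i, 1 ≤ i → i ≤ n → f i < nxt n f i → i = m - 1 := by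
    intro i hi1 hin hlt
    exact Finset.card_le_one.mp hanti i
      (by simp only [Finset.mem_filter, Finset.mem_Icc]; exact ⟨⟨hi1, hin⟩, hlt⟩)
      (m - 1) hasc
  have hstep : ∀ i, m ≤ i → i < n → f (i + 1) ≤ f i := by
    intro i hmi hin
    by_contra h
    push_neg at h
    have hlt : f i < nxt n f i := by
      unfold nxt
      rw [if_neg (by omega)]
      exact h
    have := huniq i (by omega) (by omega) hlt
    omega
  have hmono : ∀ k, m + k ≤ n → f (m + k) ≤ f m := by
    intro k
    induction k with
    | zero => intro _; exact le_rfl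
    | succ k ih =>
      intro h
      exact le_trans (hstep (m + k) (by omega) (by omega)) (ih (by omega))
  have him1 : im n f ⊆ Finset.Icc 1 (f m) := by
    intro y hy
    simp only [im, Finset.mem_image, Finset.mem_Icc] at hy ⊢
    obtain ⟨x, ⟨hx1, hxn⟩, rfl⟩ := hy
    rcases Nat.lt_or_ge x m with h | h
    · rw [hsmall x hx1 h]; exact ⟨le_rfl, hfm1⟩
    · obtain ⟨k, rfl⟩ := Nat.exists_eq_add_of_le h
      exact ⟨(hmap _ hx1 hxn).1, hmono k (by omega)⟩
  have hc1 : (im n f).card ≤ m := by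
    calc (im n f).card ≤ (Finset.Icc 1 (f m)).card := Finset.card_le_card him1
      _ = f m := by rw [Nat.card_Icc]; omega
      _ ≤ m := hdec m hm1 hmn
  have him2 : im n f ⊆ insert 1 ((Finset.Icc m n).image f) := by
    intro y hy
    simp only [im, Finset.mem_image, Finset.mem_Icc] at hy
    obtain ⟨x, ⟨hx1, hxn⟩, rfl⟩ := hy
    rcases Nat.lt_or_ge x m with h | h
    · rw [hsmall x hx1 h]; exact Finset.mem_insert_self 1 _
    · exact Finset.mem_insert_of_mem
        (Finset.mem_image.mpr ⟨x, Finset.mem_Icc.mpr ⟨h, hxn⟩, rfl⟩)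
  have hc2 : (im n f).card ≤ n - m + 2 := by
    have h1 := Finset.card_le_card him2
    have h2 := Finset.card_insert_le 1 ((Finset.Icc m n).image f)
    have h3 := Finset.card_image_le (s := Finset.Icc m n) (f := f)
    have h4 : (Finset.Icc m n).card = n - m + 1 := by rw [Nat.card_Icc]; omega
    omega
  have hdeg : ordDeg n f = m := rfl
  rw [hdeg]
  omega

end ORDPaper
end

section
/- For 3 ≤ r ≤ ⌈(n+1)/2⌉ and r ≤ m ≤ n−r+2, the number of α ∈ RD*_n with |im(α)| = r and order-reversing degree exactly m equals C(m−1, r−1)·C(n−m+1, r−1). -/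
open Finset

namespace ORDPaper

/-!
A map `f` counted here is `1` on `[1, m)` with `f m ≥ 2`, and `m - 1` is its one ascent, so
`f` is antitone on `[m, n]`. Extended by `f (n + 1) = f 1 = 1` (the value `nxt` wraps around
to), `f` is an antitone staircase on `[m, n + 1]` determined by its image `{1} ∪ S`, where
`S ⊆ [2, m]`, and its set `T ⊆ [m + 1, n + 1]` of descents, and it has exactly `|S|` descents.
Conversely every pair `(S, T)` with `|S| = |T| = r - 1` gives such a map, which is not
orientation-preserving exactly because it has `r - 1 ≥ 2` cyclic descents. Counting pairs gives
`C(m-1, r-1) C(n-m+1, r-1)`.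
-/

section FinsetNth

variable {V : Finset ℕ} {i j : ℕ}

theorem nth_mem_finset (hj : j < #V) : Nat.nth (· ∈ V) j ∈ V :=
  Nat.nth_mem_of_lt_card (p := (· ∈ V)) V.finite_toSet (by simpa using hj)

theorem nth_lt_nth_finset (hij : i < j) (hj : j < #V) :
    Nat.nth (· ∈ V) i < Nat.nth (· ∈ V) j :=
  Nat.nth_lt_nth_of_lt_card (p := (· ∈ V)) V.finite_toSet hij (by simpa using hj)

theorem nth_le_nth_finset (hij : i ≤ j) (hj : j < #V) :
    Nat.nth (· ∈ V) i ≤ Nat.nth (· ∈ V) j :=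
  Nat.nth_le_nth_of_lt_card (p := (· ∈ V)) V.finite_toSet hij (by simpa using hj)

theorem nth_card_filter_lt {v : ℕ} (hv : v ∈ V) :
    Nat.nth (· ∈ V) #{s ∈ V | s < v} = v := by
  convert Nat.nth_count (p := (· ∈ V)) hv using 2
  rw [Nat.count_eq_card_filter_range]
  congr 1; ext s; simp [and_comm]

end FinsetNth

def descents (g : ℕ → ℕ) (a b : ℕ) : Finset ℕ := {t ∈ Icc (a + 1) b | g t < g (t - 1)}

section Descents

variable {g : ℕ → ℕ} {a b : ℕ}

theorem insert_filter_descents_gt {x : ℕ} (hx : x + 1 ∈ descents g a b) :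
    insert (x + 1) {t ∈ descents g a b | x + 1 < t} = {t ∈ descents g a b | x < t} := by
  ext t; simp only [mem_insert, mem_filter]; grind

theorem insert_filter_image_lt (hg : AntitoneOn g (Set.Icc a b)) {x : ℕ} (hax : a ≤ x)
    (hxb : x < b) (hlt : g (x + 1) < g x) :
    insert (g (x + 1)) {s ∈ (Icc a b).image g | s < g (x + 1)}
      = {s ∈ (Icc a b).image g | s < g x} := by
  ext s
  simp only [mem_insert, mem_filter, mem_image, mem_Icc]
  constructor
  · rintro (rfl | ⟨hs, hlt'⟩)
    · exact ⟨⟨x + 1, ⟨by omega, hxb⟩, rfl⟩, hlt⟩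
    · exact ⟨hs, hlt'.trans hlt⟩
  · rintro ⟨⟨y, hy, rfl⟩, hy'⟩
    have hxy : x + 1 ≤ y := by
      by_contra! h
      exact absurd (hg ⟨hy.1, by omega⟩ ⟨hax, hxb.le⟩ (by omega)) (by omega)
    have := hg ⟨by omega, hxb⟩ hy hxy
    grind

theorem card_filter_descents_gt (hg : AntitoneOn g (Set.Icc a b)) {x : ℕ} (hax : a ≤ x)
    (hxb : x ≤ b) : #{t ∈ descents g a b | x < t} = #{s ∈ (Icc a b).image g | s < g x} := by
  obtain ⟨k, hk⟩ := Nat.exists_eq_add_of_le hxb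
  induction k generalizing x with
  | zero =>
    subst hk
    rw [filter_eq_empty_iff.mpr, filter_eq_empty_iff.mpr]
    · simp only [mem_image, mem_Icc, not_lt, forall_exists_index, and_imp]
      rintro _ y hay hyb rfl
      exact hg ⟨hay, hyb⟩ ⟨hax, le_rfl⟩ (by simpa using hyb)
    · intro t ht
      simp only [descents, mem_filter, mem_Icc] at ht
      omega
  | succ k ih =>
    have ih := ih (x := x + 1) (by omega) (by omega) (by omega)
    have hle : g (x + 1) ≤ g x := hg ⟨hax, by omega⟩ ⟨by omega, by omega⟩ (by omega)
    rcases hle.lt_or_eq with hlt | heq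
    · have hmem : x + 1 ∈ descents g a b :=
        mem_filter.mpr ⟨mem_Icc.mpr ⟨by omega, by omega⟩, by rwa [Nat.add_sub_cancel]⟩
      rw [← insert_filter_descents_gt hmem, ← insert_filter_image_lt hg hax (by omega) hlt,
        card_insert_of_notMem (by simp), card_insert_of_notMem (by simp), ih]
    · rw [← heq, ← ih]
      congr 1; ext t; simp only [mem_filter, descents, mem_Icc]
      constructor
      · rintro ⟨h, hxt⟩
        refine ⟨h, lt_of_le_of_ne hxt fun hxt => ?_⟩
        subst hxt; simp [heq] at h
      · rintro ⟨h, hxt⟩; exact ⟨h, by omega⟩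

theorem descents_congr {g' : ℕ → ℕ} (h : Set.EqOn g g' (Set.Icc a b)) :
    descents g a b = descents g' a b := by
  refine filter_congr fun t ht => ?_
  rw [mem_Icc] at ht
  rw [h ⟨by omega, ht.2⟩, h ⟨by omega, by omega⟩]

theorem nth_card_filter_descents_gt (hg : AntitoneOn g (Set.Icc a b)) {x : ℕ} (hax : a ≤ x)
    (hxb : x ≤ b) : Nat.nth (· ∈ (Icc a b).image g) #{t ∈ descents g a b | x < t} = g x := by
  rw [card_filter_descents_gt hg hax hxb]
  exact nth_card_filter_lt (mem_image_of_mem g (mem_Icc.mpr ⟨hax, hxb⟩))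

theorem card_descents_add_one (hg : AntitoneOn g (Set.Icc a b)) (hab : a ≤ b) :
    #(descents g a b) + 1 = #((Icc a b).image g) := by
  have hga : g a ∈ (Icc a b).image g := mem_image_of_mem g (mem_Icc.mpr ⟨le_rfl, hab⟩)
  have hmax : {s ∈ (Icc a b).image g | s < g a} = ((Icc a b).image g).erase (g a) := by
    ext s
    simp only [mem_filter, mem_erase, mem_image, mem_Icc]
    constructor
    · rintro ⟨hs, hlt⟩; exact ⟨hlt.ne, hs⟩
    · rintro ⟨hne, y, hy, rfl⟩
      exact ⟨⟨y, hy, rfl⟩, lt_of_le_of_ne (hg ⟨le_rfl, hab⟩ hy hy.1) hne⟩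
  have hall : {t ∈ descents g a b | a < t} = descents g a b :=
    filter_true_of_mem fun t ht => by simp only [descents, mem_filter, mem_Icc] at ht; omega
  rw [← hall, card_filter_descents_gt hg le_rfl hab, hmax, card_erase_add_one hga]

end Descents

/-- When `#V = #T + 1`: starts at the largest element of `V` and steps down to the next one
at each point of `T`. -/
noncomputable def staircase (V T : Finset ℕ) (x : ℕ) : ℕ := Nat.nth (· ∈ V) #{t ∈ T | x < t}

section Staircase

variable {V T : Finset ℕ} (hV : #V = #T + 1)
include hV

theorem staircase_mem (x : ℕ) : staircase V T x ∈ V :=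
  nth_mem_finset ((card_filter_le _ _).trans_lt (by omega))

theorem staircase_antitone : Antitone (staircase V T) := fun x y hxy =>
  nth_le_nth_finset (card_le_card (monotone_filter_right _ fun t hyt => by omega))
    ((card_filter_le _ _).trans_lt (by omega))

theorem descents_staircase {a b : ℕ} (hT : T ⊆ Icc (a + 1) b) :
    descents (staircase V T) a b = T := by
  ext t
  simp only [descents, mem_filter, mem_Icc]
  have hcard : ∀ u, #{s ∈ T | u < s} < #V := fun u => (card_filter_le _ _).trans_lt (by omega)
  by_cases ht : t ∈ T
  · have hins : insert t {s ∈ T | t < s} = {s ∈ T | t - 1 < s} := by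
      ext s; simp only [mem_insert, mem_filter]; have := mem_Icc.mp (hT ht); grind
    have := mem_Icc.mp (hT ht)
    refine iff_of_true ⟨this, nth_lt_nth_finset ?_ (hcard _)⟩ ht
    rw [← hins, card_insert_of_notMem (by simp)]; omega
  · have heq : {s ∈ T | t < s} = {s ∈ T | t - 1 < s} := by
      ext s; simp only [mem_filter]; grind
    simp [staircase, heq, ht]

theorem image_staircase {a b : ℕ} (hT : T ⊆ Icc (a + 1) b) (hab : a ≤ b) :
    (Icc a b).image (staircase V T) = V := by
  refine eq_of_subset_of_card_le (image_subset_iff.mpr fun x _ => staircase_mem hV x) ?_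
  rw [← card_descents_add_one ((staircase_antitone hV).antitoneOn _) hab,
    descents_staircase hV hT, hV]

end Staircase

section Orientation

variable {n m : ℕ} {f : ℕ → ℕ}

theorem nxt_eq_update (hf1 : f 1 = 1) {i : ℕ} (hi : i ≤ n) :
    nxt n f i = Function.update f (n + 1) 1 (i + 1) := by
  unfold nxt
  split_ifs with h
  · subst h; simp [hf1]
  · rw [Function.update_of_ne (by omega)]

theorem card_descents_le_one_of_cyclic (hf1 : f 1 = 1) {a : ℕ} (ha : 1 ≤ a)
    (hc : Cyclic n f) :
    #(descents (Function.update f (n + 1) 1) a (n + 1)) ≤ 1 := by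
  refine le_trans (card_le_card_of_injOn (· - 1) (fun t ht => ?_) fun t ht t' ht' h => ?_) hc
  · rw [mem_coe, descents, mem_filter, mem_Icc] at ht
    dsimp only
    rw [mem_coe, mem_filter, mem_Icc, nxt_eq_update hf1 (by omega),
      Nat.sub_add_cancel (by omega)]
    refine ⟨⟨by omega, by omega⟩, ?_⟩
    rw [Function.update_of_ne (by omega : t - 1 ≠ n + 1)] at ht
    exact ht.2
  · rw [mem_coe, descents, mem_filter, mem_Icc] at ht ht'
    simp only at h
    omega

theorem antiCyclic_of_antitoneOn (hm : 2 ≤ m) (h1 : ∀ x, 1 ≤ x → x < m → f x = 1)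
    (hg : AntitoneOn (Function.update f (n + 1) 1) (Set.Icc m (n + 1))) : AntiCyclic n f := by
  refine (card_le_card (t := {m - 1}) fun i hi => ?_).trans (card_singleton _).le
  obtain ⟨hi, hasc⟩ := mem_filter.mp hi
  rw [mem_Icc] at hi
  rw [nxt_eq_update (h1 1 le_rfl (by omega)) hi.2] at hasc
  rw [mem_singleton]
  by_contra hne
  rcases lt_or_ge i m with him | him
  · have hnext : Function.update f (n + 1) 1 (i + 1) = 1 := by
      rcases eq_or_ne (i + 1) (n + 1) with h | h
      · rw [h, Function.update_self]
      · rw [Function.update_of_ne h, h1 _ (by omega) (by omega)]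
    rw [hnext, h1 i hi.1 him] at hasc
    exact lt_irrefl _ hasc
  · have := hg ⟨him, by omega⟩ ⟨by omega, by omega⟩ (Nat.le_add_right i 1)
    rw [Function.update_of_ne (by omega : i ≠ n + 1)] at this
    omega

theorem antitoneOn_of_antiCyclic (hac : AntiCyclic n f) (hm : 2 ≤ m) (hmn : m ≤ n)
    (hasc : f (m - 1) < f m) : AntitoneOn f (Set.Icc m n) := by
  refine antitoneOn_of_add_one_le Set.ordConnected_Icc fun i _ hi hi1 => ?_
  by_contra! h
  have ascent : ∀ j, 1 ≤ j → j < n → f j < f (j + 1) →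
      j ∈ {i ∈ Icc 1 n | f i < nxt n f i} := fun j hj1 hjn hj =>
    mem_filter.mpr ⟨mem_Icc.mpr ⟨hj1, hjn.le⟩, by rwa [nxt, if_neg hjn.ne]⟩
  have hm1 := ascent (m - 1) (by omega) (by omega) (by rwa [Nat.sub_add_cancel (by omega)])
  have hi := ascent i (by grind) (by grind) h
  exact absurd hac (one_lt_card.mpr ⟨m - 1, hm1, i, hi, by grind⟩).not_ge

theorem im_eq_image_update (hm : 2 ≤ m) (hmn : m ≤ n)
    (h1 : ∀ x, 1 ≤ x → x < m → f x = 1) :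
    im n f = (Icc m (n + 1)).image (Function.update f (n + 1) 1) := by
  ext v
  simp only [im, mem_image, mem_Icc]
  constructor
  · rintro ⟨x, ⟨hx1, hxn⟩, rfl⟩
    by_cases hxm : x < m
    · exact ⟨n + 1, ⟨by omega, le_rfl⟩, by rw [Function.update_self, h1 x hx1 hxm]⟩
    · exact ⟨x, ⟨by omega, by omega⟩, Function.update_of_ne (by omega) _ _⟩
  · rintro ⟨y, ⟨hmy, hyn⟩, rfl⟩
    rcases eq_or_ne y (n + 1) with rfl | hy
    · exact ⟨1, ⟨le_rfl, by omega⟩, by rw [Function.update_self, h1 1 le_rfl (by omega)]⟩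
    · exact ⟨y, ⟨by omega, by omega⟩, (Function.update_of_ne hy _ _).symm⟩

theorem antitoneOn_update_add_one {c : ℕ} (hf : AntitoneOn f (Set.Icc m n))
    (hc : ∀ x ∈ Set.Icc m n, c ≤ f x) :
    AntitoneOn (Function.update f (n + 1) c) (Set.Icc m (n + 1)) := by
  intro x hx y hy hxy
  rcases eq_or_ne y (n + 1) with rfl | hy'
  · rcases eq_or_ne x (n + 1) with rfl | hx'
    · exact le_rfl
    · rw [Function.update_self, Function.update_of_ne hx']
      exact hc x ⟨hx.1, by grind⟩
  · rw [Function.update_of_ne hy', Function.update_of_ne (by grind)]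
    exact hf ⟨hx.1, by grind⟩ ⟨hy.1, by grind⟩ hxy

theorem ordDeg_eq (hm : 1 ≤ m) (hmn : m ≤ n) (hfm : f m ≠ 1)
    (h1 : ∀ x, 1 ≤ x → x < m → f x = 1) : ordDeg n f = m :=
  IsLeast.csInf_eq
    ⟨⟨hm, hmn, hfm⟩, fun x ⟨hx1, _, hx⟩ => not_lt.mp fun hxm => hx (h1 x hx1 hxm)⟩

theorem apply_one_of_mem_Dn (hf : f ∈ Dn n) (hn : 1 ≤ n) : f 1 = 1 :=
  le_antisymm (hf.2 1 le_rfl hn) (hf.1.1 1 le_rfl hn).1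

theorem one_mem_im (hf : f ∈ Dn n) (hn : 1 ≤ n) : 1 ∈ im n f :=
  mem_image.mpr ⟨1, mem_Icc.mpr ⟨le_rfl, hn⟩, apply_one_of_mem_Dn hf hn⟩

theorem ordDeg_spec (hf : f ∈ Dn n) (him : 2 ≤ #(im n f)) :
    2 ≤ ordDeg n f ∧ ordDeg n f ≤ n ∧ f (ordDeg n f) ≠ 1 ∧
      ∀ x, 1 ≤ x → x < ordDeg n f → f x = 1 := by
  obtain ⟨v, hv, hv1⟩ := exists_mem_ne (by omega : 1 < #(im n f)) 1
  obtain ⟨x, hx, rfl⟩ := mem_image.mp hv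
  rw [mem_Icc] at hx
  have hf1 := apply_one_of_mem_Dn hf (by omega)
  obtain ⟨h1, hn, hne⟩ :=
    Nat.sInf_mem (⟨x, hx.1, hx.2, hv1⟩ : {x | 1 ≤ x ∧ x ≤ n ∧ f x ≠ 1}.Nonempty)
  rw [ordDeg]
  refine ⟨?_, hn, hne, fun y hy hym => ?_⟩
  · by_contra h
    exact hne (by rwa [show sInf {x | 1 ≤ x ∧ x ≤ n ∧ f x ≠ 1} = 1 by omega])
  · by_contra hfy
    exact Nat.notMem_of_lt_sInf hym ⟨hy, by omega, hfy⟩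

end Orientation

noncomputable def rdMap (n m : ℕ) (S T : Finset ℕ) : ℕ → ℕ := fun x =>
  if ¬(1 ≤ x ∧ x ≤ n) then x else if x < m then 1 else staircase (insert 1 S) T x

section RdMap

variable {n m : ℕ} {S T : Finset ℕ}

theorem rdMap_of_lt {x : ℕ} (hx : 1 ≤ x) (hxm : x < m) (hxn : x ≤ n) :
    rdMap n m S T x = 1 := by
  simp [rdMap, hx, hxm, hxn]

theorem rdMap_of_ge {x : ℕ} (hm : 1 ≤ m) (hmx : m ≤ x) (hxn : x ≤ n) :
    rdMap n m S T x = staircase (insert 1 S) T x := by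
  simp [rdMap, hxn, hm.trans hmx, not_lt.mpr hmx]

theorem one_notMem_of_subset (hS : S ⊆ Icc 2 m) : 1 ∉ S := fun h => by simpa using hS h

theorem insert_one_subset (hS : S ⊆ Icc 2 m) (hm : 1 ≤ m) : insert 1 S ⊆ Icc 1 m :=
  insert_subset (mem_Icc.mpr ⟨le_rfl, hm⟩) (hS.trans (Icc_subset_Icc_left (by norm_num)))

theorem card_insert_one (hS : S ⊆ Icc 2 m) (hST : #T = #S) : #(insert 1 S) = #T + 1 := by
  rw [card_insert_of_notMem (one_notMem_of_subset hS), hST]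

theorem staircase_add_one (hS : S ⊆ Icc 2 m) (hT : T ⊆ Icc (m + 1) (n + 1)) :
    staircase (insert 1 S) T (n + 1) = 1 := by
  have hT' : {t ∈ T | n + 1 < t} = ∅ :=
    filter_eq_empty_iff.mpr fun t ht => by have := mem_Icc.mp (hT ht); omega
  have hS' : {s ∈ insert 1 S | s < 1} = ∅ :=
    filter_eq_empty_iff.mpr fun s hs => by
      rcases mem_insert.mp hs with rfl | hs
      · simp
      · have := (mem_Icc.mp (hS hs)).1; omega
  have h1 := nth_card_filter_lt (mem_insert_self 1 S)
  rw [hS'] at h1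
  rw [staircase, hT', h1]

theorem eqOn_update_rdMap (hS : S ⊆ Icc 2 m) (hT : T ⊆ Icc (m + 1) (n + 1)) (hm : 1 ≤ m) :
    Set.EqOn (Function.update (rdMap n m S T) (n + 1) 1) (staircase (insert 1 S) T)
      (Set.Icc m (n + 1)) := by
  intro x hx
  rcases eq_or_ne x (n + 1) with rfl | hx'
  · rw [Function.update_self, staircase_add_one hS hT]
  · rw [Function.update_of_ne hx', rdMap_of_ge hm hx.1 (by grind)]

theorem antitoneOn_update_rdMap (hS : S ⊆ Icc 2 m) (hT : T ⊆ Icc (m + 1) (n + 1))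
    (hST : #T = #S) (hm : 1 ≤ m) :
    AntitoneOn (Function.update (rdMap n m S T) (n + 1) 1) (Set.Icc m (n + 1)) :=
  ((staircase_antitone (card_insert_one hS hST)).antitoneOn _).congr
    (eqOn_update_rdMap hS hT hm).symm

theorem descents_update_rdMap (hS : S ⊆ Icc 2 m) (hT : T ⊆ Icc (m + 1) (n + 1))
    (hST : #T = #S) (hm : 1 ≤ m) :
    descents (Function.update (rdMap n m S T) (n + 1) 1) m (n + 1) = T :=
  (descents_congr (eqOn_update_rdMap hS hT hm)).trans
    (descents_staircase (card_insert_one hS hST) hT)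

theorem im_rdMap (hS : S ⊆ Icc 2 m) (hT : T ⊆ Icc (m + 1) (n + 1)) (hST : #T = #S)
    (hm : 2 ≤ m) (hmn : m ≤ n) : im n (rdMap n m S T) = insert 1 S := by
  rw [im_eq_image_update hm hmn fun x hx hxm => rdMap_of_lt hx hxm (by omega),
    image_congr (by rw [coe_Icc]; exact eqOn_update_rdMap hS hT (by omega)),
    image_staircase (card_insert_one hS hST) hT (by omega)]

theorem rdMap_mem_Dn (hS : S ⊆ Icc 2 m) (hST : #T = #S) (hm : 2 ≤ m) (hmn : m ≤ n) :
    rdMap n m S T ∈ Dn n := by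
  have hval : ∀ x, staircase (insert 1 S) T x ∈ Icc 1 m := fun x =>
    insert_one_subset hS (by omega) (staircase_mem (card_insert_one hS hST) x)
  refine ⟨⟨fun x hx hxn => ?_, fun x hx => if_pos hx⟩, fun x hx hxn => ?_⟩
  all_goals
    rcases lt_or_ge x m with hxm | hxm
    · rw [rdMap_of_lt hx hxm hxn]; omega
    · rw [rdMap_of_ge (by omega) hxm hxn]; have := mem_Icc.mp (hval x); omega

theorem ordDeg_rdMap (hS : S ⊆ Icc 2 m) (hT : T ⊆ Icc (m + 1) (n + 1)) (hST : #T = #S)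
    (hT0 : T.Nonempty) (hm : 2 ≤ m) (hmn : m ≤ n) : ordDeg n (rdMap n m S T) = m := by
  refine ordDeg_eq (by omega) hmn ?_ fun x hx hxm => rdMap_of_lt hx hxm (by omega)
  have hlast : {t ∈ T | n + 1 < t} = ∅ :=
    filter_eq_empty_iff.mpr fun t ht => by have := mem_Icc.mp (hT ht); omega
  have hfirst : {t ∈ T | m < t} = T :=
    filter_true_of_mem fun t ht => by have := mem_Icc.mp (hT ht); omega
  have hlt : staircase (insert 1 S) T (n + 1) < staircase (insert 1 S) T m :=
    nth_lt_nth_finset (by rw [hlast, hfirst, card_empty]; exact hT0.card_pos)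
      (by rw [hfirst, card_insert_one hS hST]; omega)
  rw [staircase_add_one hS hT] at hlt
  rw [rdMap_of_ge (by omega) le_rfl hmn]
  exact hlt.ne'

theorem rdMap_mem_RDstar (hS : S ⊆ Icc 2 m) (hT : T ⊆ Icc (m + 1) (n + 1)) (hST : #T = #S)
    (hT2 : 2 ≤ #T) (hm : 2 ≤ m) (hmn : m ≤ n) : rdMap n m S T ∈ RDstar n := by
  refine ⟨rdMap_mem_Dn hS hST hm hmn,
    antiCyclic_of_antitoneOn hm (fun x hx hxm => rdMap_of_lt hx hxm (by omega))
      (antitoneOn_update_rdMap hS hT hST (by omega)), fun hc => ?_⟩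
  have := card_descents_le_one_of_cyclic (rdMap_of_lt le_rfl (by omega) (by omega))
    (by omega : 1 ≤ m) hc
  rw [descents_update_rdMap hS hT hST (by omega)] at this
  omega

def rdParams (n m k : ℕ) : Finset (Finset ℕ × Finset ℕ) :=
  (Icc 2 m).powersetCard k ×ˢ (Icc (m + 1) (n + 1)).powersetCard k

theorem mem_rdParams {k : ℕ} {p : Finset ℕ × Finset ℕ} :
    p ∈ rdParams n m k ↔
      (p.1 ⊆ Icc 2 m ∧ #p.1 = k) ∧ p.2 ⊆ Icc (m + 1) (n + 1) ∧ #p.2 = k := by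
  rw [rdParams, mem_product, mem_powersetCard, mem_powersetCard]

theorem card_rdParams {k : ℕ} :
    #(rdParams n m k) = (m - 1).choose k * (n + 1 - m).choose k := by
  rw [rdParams, card_product, card_powersetCard, card_powersetCard, Nat.card_Icc, Nat.card_Icc]
  congr 2; omega

end RdMap

section Decomposition

variable {n : ℕ} {f : ℕ → ℕ}

theorem antitoneOn_update_of_antiCyclic (hf : f ∈ Dn n) (hac : AntiCyclic n f)
    (him : 2 ≤ #(im n f)) :
    AntitoneOn (Function.update f (n + 1) 1) (Set.Icc (ordDeg n f) (n + 1)) := by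
  obtain ⟨hm, hmn, hfm, h1⟩ := ordDeg_spec hf him
  have hpos : ∀ x ∈ Set.Icc (ordDeg n f) n, 1 ≤ f x := fun x hx =>
    (hf.1.1 x (by grind) hx.2).1
  refine antitoneOn_update_add_one (antitoneOn_of_antiCyclic hac hm hmn ?_) hpos
  rw [h1 _ (by omega) (by omega)]
  have := hpos _ ⟨le_rfl, hmn⟩
  omega

theorem erase_one_im_subset (hf : f ∈ Dn n) (hac : AntiCyclic n f) (him : 2 ≤ #(im n f)) :
    (im n f).erase 1 ⊆ Icc 2 (ordDeg n f) := by
  obtain ⟨hm, hmn, -, h1⟩ := ordDeg_spec hf him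
  intro v hv
  obtain ⟨hv1, hv⟩ := mem_erase.mp hv
  obtain ⟨x, hx, rfl⟩ := mem_image.mp hv
  rw [mem_Icc] at hx
  have hmx : ordDeg n f ≤ x := not_lt.mp fun hxm => hv1 (h1 x hx.1 hxm)
  have hanti :=
    antitoneOn_update_of_antiCyclic hf hac him ⟨le_rfl, by omega⟩ ⟨hmx, by omega⟩ hmx
  rw [Function.update_of_ne (by omega), Function.update_of_ne (by omega)] at hanti
  have := hf.2 _ (by omega) hmn
  have := (hf.1.1 x hx.1 hx.2).1
  exact mem_Icc.mpr ⟨by omega, by omega⟩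

theorem card_descents_update (hf : f ∈ Dn n) (hac : AntiCyclic n f) (him : 2 ≤ #(im n f)) :
    #(descents (Function.update f (n + 1) 1) (ordDeg n f) (n + 1)) = #((im n f).erase 1) := by
  obtain ⟨hm, hmn, -, h1⟩ := ordDeg_spec hf him
  have h := card_descents_add_one (antitoneOn_update_of_antiCyclic hf hac him) (by omega)
  rw [← im_eq_image_update hm hmn h1] at h
  rw [card_erase_of_mem (one_mem_im hf (by omega))]
  omega

theorem rdMap_erase_one_im (hf : f ∈ Dn n) (hac : AntiCyclic n f) (him : 2 ≤ #(im n f)) :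
    rdMap n (ordDeg n f) ((im n f).erase 1)
      (descents (Function.update f (n + 1) 1) (ordDeg n f) (n + 1)) = f := by
  obtain ⟨hm, hmn, -, h1⟩ := ordDeg_spec hf him
  funext x
  by_cases hx : 1 ≤ x ∧ x ≤ n
  · rcases lt_or_ge x (ordDeg n f) with hxm | hxm
    · rw [rdMap_of_lt hx.1 hxm hx.2, h1 x hx.1 hxm]
    · rw [rdMap_of_ge (by omega) hxm hx.2, insert_erase (one_mem_im hf (by omega)), staircase,
        im_eq_image_update hm hmn h1,
        nth_card_filter_descents_gt (antitoneOn_update_of_antiCyclic hf hac him) hxm (by omega),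
        Function.update_of_ne (by omega)]
  · rw [rdMap, if_pos hx, hf.1.2 x hx]

theorem setOf_eq_image_rdMap {m k : ℕ} (hk : 2 ≤ k) (hm : 2 ≤ m) (hmn : m ≤ n) :
    {f | f ∈ RDstar n ∧ #(im n f) = k + 1 ∧ ordDeg n f = m}
      = (fun p : Finset ℕ × Finset ℕ => rdMap n m p.1 p.2) '' ↑(rdParams n m k) := by
  ext f
  simp only [Set.mem_ofPred_eq, Set.mem_image, mem_coe, mem_rdParams, Prod.exists]
  constructor
  · rintro ⟨⟨hf, hac, -⟩, him, rfl⟩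
    have him2 : 2 ≤ #(im n f) := by omega
    have hcard : #((im n f).erase 1) = k := by
      rw [card_erase_of_mem (one_mem_im hf (by grind)), him, Nat.add_sub_cancel]
    exact ⟨_, _, ⟨⟨erase_one_im_subset hf hac him2, hcard⟩, filter_subset _ _,
      (card_descents_update hf hac him2).trans hcard⟩, rdMap_erase_one_im hf hac him2⟩
  · rintro ⟨S, T, ⟨⟨hS, hSk⟩, hT, hTk⟩, rfl⟩
    have hST : #T = #S := hTk.trans hSk.symm
    refine ⟨rdMap_mem_RDstar hS hT hST (by omega) hm hmn, ?_,
      ordDeg_rdMap hS hT hST (card_pos.mp (by omega)) hm hmn⟩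
    rw [im_rdMap hS hT hST hm hmn, card_insert_of_notMem (one_notMem_of_subset hS), hSk]

theorem injOn_rdMap {m k : ℕ} (hm : 2 ≤ m) (hmn : m ≤ n) :
    Set.InjOn (fun p : Finset ℕ × Finset ℕ => rdMap n m p.1 p.2) ↑(rdParams n m k) := by
  rintro ⟨S, T⟩ hp ⟨S', T'⟩ hp' h
  obtain ⟨⟨hS, hSk⟩, hT, hTk⟩ := mem_rdParams.mp hp
  obtain ⟨⟨hS', hSk'⟩, hT', hTk'⟩ := mem_rdParams.mp hp'
  dsimp only at h hS hT hS' hT' hSk hTk hSk' hTk'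
  have hST : #T = #S := hTk.trans hSk.symm
  have hST' : #T' = #S' := hTk'.trans hSk'.symm
  have him := im_rdMap hS hT hST hm hmn
  rw [h, im_rdMap hS' hT' hST' hm hmn] at him
  rw [Prod.mk.injEq, ← erase_insert (one_notMem_of_subset hS), ← him,
    erase_insert (one_notMem_of_subset hS'), ← descents_update_rdMap hS hT hST (by omega), h,
    descents_update_rdMap hS' hT' hST' (by omega)]
  exact ⟨rfl, rfl⟩

end Decomposition

theorem card_rdstar_fixed_degree_general (n r m : ℕ) (hr3 : 3 ≤ r)
    (hrm : r ≤ m) (hm : m ≤ n - r + 2) :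
    {f | f ∈ RDstar n ∧ (im n f).card = r ∧ ordDeg n f = m}.ncard
      = Nat.choose (m - 1) (r - 1) * Nat.choose (n - m + 1) (r - 1) := by
  obtain ⟨k, rfl⟩ : ∃ k, r = k + 1 := ⟨r - 1, by omega⟩
  rw [setOf_eq_image_rdMap (by omega) (by omega) (by omega),
    (injOn_rdMap (by omega) (by omega)).ncard_image, Set.ncard_coe_finset, card_rdParams,
    Nat.add_sub_cancel]
  congr 2
  omega

theorem card_rdstar_fixed_degree (n r m : ℕ) (hr3 : 3 ≤ r) (hr : r ≤ (n + 2) / 2)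
    (hrm : r ≤ m) (hm : m ≤ n - r + 2) :
    {f | f ∈ RDstar n ∧ (im n f).card = r ∧ ordDeg n f = m}.ncard
      = Nat.choose (m - 1) (r - 1) * Nat.choose (n - m + 1) (r - 1) :=
  card_rdstar_fixed_degree_general n r m hr3 hrm hm

end ORDPaper
end

section
/- For n ≥ 5 and 3 ≤ r ≤ ⌈(n+1)/2⌉, the number of nilpotent elements of J_{n,r} (i.e., those α ∈ J_{n,r} with fix(α) = {1}) equals |J_{n−1,r}|, the number of elements of RD*_{n−1} with image of size r. -/
open Finset

namespace ORDPaper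

/-- The hat map: `1α̂ = 1`, `iα̂ = (i-1)α` for `2 ≤ i ≤ n`, identity outside. -/
def hat (n : ℕ) (g : ℕ → ℕ) : ℕ → ℕ := fun x =>
  if 1 ≤ x ∧ x ≤ n then (if x = 1 then 1 else g (x - 1)) else x

/-- The inverse map: `iγ = (i+1)f` for `1 ≤ i ≤ m`, identity outside. -/
def unhat (m : ℕ) (f : ℕ → ℕ) : ℕ → ℕ := fun x =>
  if 1 ≤ x ∧ x ≤ m then f (x + 1) else x

lemma hat_one (m : ℕ) (g : ℕ → ℕ) : hat (m + 1) g 1 = 1 := by simp [hat]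

lemma hat_succ (m : ℕ) (g : ℕ → ℕ) (i : ℕ) (h1 : 1 ≤ i) (h2 : i ≤ m) :
    hat (m + 1) g (i + 1) = g i := by
  simp only [hat]
  rw [if_pos ⟨by omega, by omega⟩, if_neg (by omega : ¬ (i + 1 = 1))]
  congr 1

lemma nxt_hat_one (m : ℕ) (hm : 1 ≤ m) (g : ℕ → ℕ) :
    nxt (m + 1) (hat (m + 1) g) 1 = g 1 := by
  have h1 : (1 : ℕ) ≠ m + 1 := by omega
  rw [nxt, if_neg h1]
  exact hat_succ m g 1 le_rfl hm

lemma nxt_hat_succ (m : ℕ) (g : ℕ → ℕ) (hg1 : g 1 = 1) (i : ℕ) (h1 : 1 ≤ i) (h2 : i ≤ m) :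
    nxt (m + 1) (hat (m + 1) g) (i + 1) = nxt m g i := by
  by_cases hi : i = m
  · subst hi
    rw [nxt, if_pos rfl, nxt, if_pos rfl, hat_one, hg1]
  · have h1' : ¬ (i + 1 = m + 1) := by omega
    rw [nxt, if_neg h1', nxt, if_neg hi]
    exact hat_succ m g (i + 1) (by omega) (by omega)

lemma filter_card_hat (m : ℕ) (hm : 1 ≤ m) (g : ℕ → ℕ) (hg1 : g 1 = 1)
    (p : ℕ → ℕ → Prop) [DecidableRel p] (hp : ¬ p 1 1) :
    ((Finset.Icc 1 (m + 1)).filter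
        (fun i => p (hat (m + 1) g i) (nxt (m + 1) (hat (m + 1) g) i))).card
      = ((Finset.Icc 1 m).filter (fun i => p (g i) (nxt m g i))).card := by
  have hinj : Function.Injective (fun i : ℕ => i + 1) := fun a b h => Nat.succ_injective h
  have himg : (Finset.Icc 1 (m + 1)).filter
        (fun i => p (hat (m + 1) g i) (nxt (m + 1) (hat (m + 1) g) i))
      = ((Finset.Icc 1 m).filter (fun i => p (g i) (nxt m g i))).image (fun i => i + 1) := by
    ext j
    simp only [Finset.mem_filter, Finset.mem_image, Finset.mem_Icc]
    constructor
    · rintro ⟨⟨hj1, hj2⟩, hpj⟩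
      by_cases hj : j = 1
      · subst hj
        rw [hat_one, nxt_hat_one m hm, hg1] at hpj
        exact absurd hpj hp
      · refine ⟨j - 1, ⟨⟨by omega, by omega⟩, ?_⟩, by omega⟩
        have hj' : j - 1 + 1 = j := by omega
        rw [← hat_succ m g (j - 1) (by omega) (by omega),
          ← nxt_hat_succ m g hg1 (j - 1) (by omega) (by omega), hj']
        exact hpj
    · rintro ⟨i, ⟨⟨hi1, hi2⟩, hpi⟩, rfl⟩
      show (1 ≤ i + 1 ∧ i + 1 ≤ m + 1) ∧ _
      refine ⟨⟨by omega, by omega⟩, ?_⟩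
      rw [hat_succ m g i hi1 hi2, nxt_hat_succ m g hg1 i hi1 hi2]
      exact hpi
  rw [himg, Finset.card_image_of_injective _ hinj]

lemma im_hat (m : ℕ) (hm : 1 ≤ m) (g : ℕ → ℕ) (hg1 : g 1 = 1) :
    im (m + 1) (hat (m + 1) g) = im m g := by
  ext y
  simp only [im, Finset.mem_image, Finset.mem_Icc]
  constructor
  · rintro ⟨x, ⟨hx1, hx2⟩, rfl⟩
    by_cases hx : x = 1
    · subst hx
      exact ⟨1, ⟨le_rfl, hm⟩, by rw [hat_one, hg1]⟩
    · refine ⟨x - 1, ⟨by omega, by omega⟩, ?_⟩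
      have hx' : x - 1 + 1 = x := by omega
      rw [← hat_succ m g (x - 1) (by omega) (by omega), hx']
  · rintro ⟨x, ⟨hx1, hx2⟩, rfl⟩
    exact ⟨x + 1, ⟨by omega, by omega⟩, hat_succ m g x hx1 hx2⟩

lemma fix_hat (m : ℕ) (hm : 1 ≤ m) (g : ℕ → ℕ) (hdec : Decreasing m g) :
    fixSet (m + 1) (hat (m + 1) g) = {1} := by
  ext x
  simp only [fixSet, Finset.mem_filter, Finset.mem_Icc, Finset.mem_singleton]
  constructor
  · rintro ⟨⟨hx1, hx2⟩, hfx⟩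
    by_contra hx
    have h := hat_succ m g (x - 1) (by omega) (by omega)
    rw [show x - 1 + 1 = x by omega] at h
    rw [h] at hfx
    have := hdec (x - 1) (by omega) (by omega)
    omega
  · rintro rfl
    exact ⟨⟨le_rfl, by omega⟩, hat_one m g⟩

lemma g_one_eq_one (m : ℕ) (hm : 1 ≤ m) (g : ℕ → ℕ) (htr : IsTrans m g)
    (hdec : Decreasing m g) : g 1 = 1 := by
  have h1 := (htr.1 1 le_rfl hm).1
  have h2 := hdec 1 le_rfl hm
  omega

lemma hat_forward (m r : ℕ) (hm : 1 ≤ m) (g : ℕ → ℕ)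
    (hg : g ∈ RDstar m) (him : (im m g).card = r) :
    hat (m + 1) g ∈ RDstar (m + 1) ∧ (im (m + 1) (hat (m + 1) g)).card = r ∧
      fixSet (m + 1) (hat (m + 1) g) = {1} := by
  obtain ⟨⟨htr, hdec⟩, hac, hnc⟩ := hg
  have hg1 : g 1 = 1 := g_one_eq_one m hm g htr hdec
  have hcyc : Cyclic (m + 1) (hat (m + 1) g) ↔ Cyclic m g := by
    unfold Cyclic
    rw [filter_card_hat m hm g hg1 (fun a b => b < a) (by omega)]
  have hanti : AntiCyclic (m + 1) (hat (m + 1) g) ↔ AntiCyclic m g := by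
    unfold AntiCyclic
    rw [filter_card_hat m hm g hg1 (fun a b => a < b) (by omega)]
  refine ⟨⟨⟨⟨?_, ?_⟩, ?_⟩, hanti.mpr hac, fun h => hnc (hcyc.mp h)⟩,
    by rw [im_hat m hm g hg1]; exact him, fix_hat m hm g hdec⟩
  · intro x hx1 hx2
    by_cases hx : x = 1
    · subst hx; rw [hat_one]; omega
    · rw [show x = (x - 1) + 1 by omega, hat_succ m g (x - 1) (by omega) (by omega)]
      have := (htr.1 (x - 1) (by omega) (by omega))
      omega
  · intro x hx
    simp only [hat]
    rw [if_neg hx]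
  · intro x hx1 hx2
    by_cases hx : x = 1
    · subst hx; rw [hat_one]
    · rw [show x = (x - 1) + 1 by omega, hat_succ m g (x - 1) (by omega) (by omega)]
      have := hdec (x - 1) (by omega) (by omega)
      omega

lemma hat_unhat (m : ℕ) (hm : 1 ≤ m) (f : ℕ → ℕ) (htr : IsTrans (m + 1) f)
    (hf1 : f 1 = 1) : hat (m + 1) (unhat m f) = f := by
  funext x
  by_cases hx : 1 ≤ x ∧ x ≤ m + 1
  · by_cases hx1 : x = 1
    · subst hx1; rw [hat_one, hf1]
    · rw [show x = (x - 1) + 1 by omega, hat_succ m _ (x - 1) (by omega) (by omega)]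
      simp only [unhat]
      rw [if_pos ⟨by omega, by omega⟩, show x - 1 + 1 = x by omega]
  · simp only [hat]
    rw [if_neg hx, htr.2 x hx]

lemma hat_backward (m r : ℕ) (hm : 1 ≤ m) (f : ℕ → ℕ)
    (hf : f ∈ RDstar (m + 1)) (him : (im (m + 1) f).card = r)
    (hfix : fixSet (m + 1) f = {1}) :
    unhat m f ∈ RDstar m ∧ (im m (unhat m f)).card = r ∧ hat (m + 1) (unhat m f) = f := by
  obtain ⟨⟨htr, hdec⟩, hac, hnc⟩ := hf
  have hf1 : f 1 = 1 := g_one_eq_one (m + 1) (by omega) f htr hdec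
  have hnofix : ∀ x, 2 ≤ x → x ≤ m + 1 → f x ≤ x - 1 := by
    intro x hx1 hx2
    have hxne : f x ≠ x := by
      intro h
      have : x ∈ fixSet (m + 1) f := by
        simp only [fixSet, Finset.mem_filter, Finset.mem_Icc]
        exact ⟨⟨by omega, hx2⟩, h⟩
      rw [hfix, Finset.mem_singleton] at this
      omega
    have := hdec x (by omega) hx2
    omega
  have hg1 : unhat m f 1 = 1 := by
    simp only [unhat]
    rw [if_pos ⟨le_rfl, hm⟩]
    have h1 := hnofix 2 le_rfl (by omega)
    have h2 := (htr.1 2 (by omega) (by omega)).1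
    show f 2 = 1
    omega
  have hheq : hat (m + 1) (unhat m f) = f := hat_unhat m hm f htr hf1
  have hcyc : Cyclic (m + 1) f ↔ Cyclic m (unhat m f) := by
    conv_lhs => rw [← hheq]
    unfold Cyclic
    rw [filter_card_hat m hm (unhat m f) hg1 (fun a b => b < a) (by omega)]
  have hanti : AntiCyclic (m + 1) f ↔ AntiCyclic m (unhat m f) := by
    conv_lhs => rw [← hheq]
    unfold AntiCyclic
    rw [filter_card_hat m hm (unhat m f) hg1 (fun a b => a < b) (by omega)]
  have himm : im m (unhat m f) = im (m + 1) f := by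
    rw [← im_hat m hm (unhat m f) hg1, hheq]
  refine ⟨⟨⟨⟨?_, ?_⟩, ?_⟩, hanti.mp hac, fun h => hnc (hcyc.mpr h)⟩,
    by rw [himm]; exact him, hheq⟩
  · intro x hx1 hx2
    simp only [unhat]
    rw [if_pos ⟨hx1, hx2⟩]
    have h1 := hnofix (x + 1) (by omega) (by omega)
    have h2 := (htr.1 (x + 1) (by omega) (by omega)).1
    omega
  · intro x hx
    simp only [unhat]
    rw [if_neg hx]
  · intro x hx1 hx2
    simp only [unhat]
    rw [if_pos ⟨hx1, hx2⟩]
    have := hnofix (x + 1) (by omega) (by omega)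
    omega

theorem card_nilpotent_J (n r : ℕ) (hn : 5 ≤ n) (hr3 : 3 ≤ r) (hr : r ≤ (n + 2) / 2) :
    {f | f ∈ RDstar n ∧ (im n f).card = r ∧ fixSet n f = {1}}.ncard
      = {f | f ∈ RDstar (n - 1) ∧ (im (n - 1) f).card = r}.ncard := by
  obtain ⟨m, rfl⟩ : ∃ m, n = m + 1 := ⟨n - 1, by omega⟩
  have hm : 1 ≤ m := by omega
  have hsub : m + 1 - 1 = m := by omega
  rw [hsub]
  have key : {f | f ∈ RDstar (m + 1) ∧ (im (m + 1) f).card = r ∧ fixSet (m + 1) f = {1}}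
      = hat (m + 1) '' {g | g ∈ RDstar m ∧ (im m g).card = r} := by
    ext f
    constructor
    · rintro ⟨h1, h2, h3⟩
      obtain ⟨hg, hgc, heq⟩ := hat_backward m r hm f h1 h2 h3
      exact ⟨unhat m f, ⟨hg, hgc⟩, heq⟩
    · rintro ⟨g, ⟨hg, hgc⟩, rfl⟩
      exact hat_forward m r hm g hg hgc
  rw [key, Set.ncard_image_of_injOn]
  intro g hg g' hg' h
  funext x
  by_cases hx : 1 ≤ x ∧ x ≤ m
  · have := congrFun h (x + 1)
    rwa [hat_succ m g x hx.1 hx.2, hat_succ m g' x hx.1 hx.2] at this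
  · rw [hg.1.1.1.2 x hx, hg'.1.1.1.2 x hx]

end ORDPaper
end

section
/- For n ≥ 4 and 3 ≤ m ≤ n−1, the number of α ∈ RD*_n with order-reversing degree exactly m equals C(n, m−1) − m − (m−1)(n−m). -/
open Finset

namespace ORDPaper

/-!
A map of `RD*_n` with order-reversing degree `m` sends `[1, m - 1]` to `1` and `m` to a value
`≥ 2`; since `m - 1` is then an ascent, anti-cyclicity forces the map to be antitone on
`[m, n]`, with values in `[1, m]`. Conversely every such antitone map with `f m ≠ 1` lies in
`RD*_n` unless it is cyclic. By stars and bars there are `C(n, m - 1)` antitone maps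
`[m, n] → [1, m]`; one of them is the constant map `1`, and the cyclic ones are exactly the
`(m - 1)(n - m + 1)` step maps taking a value `v ∈ [2, m]` on some `[m, k]` and `1` after `k`.
-/

lemma Fin.add_sub_le_of_strictMono {k : ℕ} {e : Fin (k + 1) → ℕ} (he : StrictMono e)
    {i j : Fin (k + 1)} (hij : i ≤ j) : e i + (j - i : ℕ) ≤ e j := by
  have hmono : Monotone fun j : Fin (k + 1) => (e j : ℤ) - j :=
    Fin.monotone_iff_le_succ.2 fun i => by
      have := he (Fin.castSucc_lt_succ (i := i))
      simp only [Fin.val_castSucc, Fin.val_succ]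
      omega
  have := hmono hij
  rw [Fin.le_iff_val_le_val] at hij
  simp only at this
  omega

section StarsAndBars

def antitoneExtensions (h : ℕ → ℕ) (a b c : ℕ) : Set (ℕ → ℕ) :=
  {f | (∀ x, x ∉ Set.Icc a b → f x = h x) ∧ AntitoneOn f (Set.Icc a b) ∧
    Set.MapsTo f (Set.Icc a b) (Set.Icc 1 c)}

/-- Stars and bars: read from right to left and shifted by the position, the values of an
antitone `f` on `[a, b]` become strictly increasing. -/
def starsCode (a b : ℕ) (f : ℕ → ℕ) (j : Fin (b - a + 1)) : ℕ := f (b - j) + j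

def starsSet (a b : ℕ) (f : ℕ → ℕ) : Finset ℕ := univ.image (starsCode a b f)

variable {h f : ℕ → ℕ} {a b c : ℕ}

lemma strictMono_starsCode (hf : AntitoneOn f (Set.Icc a b)) :
    StrictMono (starsCode a b f) := by
  intro i j hij
  have hj := j.isLt
  have : f (b - j) ≥ f (b - i) := hf ⟨by omega, by omega⟩ ⟨by omega, by omega⟩ (by omega)
  simp only [starsCode]
  omega

lemma card_starsSet (hf : AntitoneOn f (Set.Icc a b)) : (starsSet a b f).card = b - a + 1 := by
  rw [starsSet, card_image_of_injective _ (strictMono_starsCode hf).injective, card_univ,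
    Fintype.card_fin]

lemma orderEmbOfFin_starsSet (hf : AntitoneOn f (Set.Icc a b)) :
    ⇑((starsSet a b f).orderEmbOfFin (card_starsSet hf)) = starsCode a b f :=
  (orderEmbOfFin_unique _ (fun j => mem_image_of_mem _ (mem_univ j))
    (strictMono_starsCode hf)).symm

lemma injOn_starsSet : Set.InjOn (starsSet a b) (antitoneExtensions h a b c) := by
  intro f hf g hg hfg
  have hcode : starsCode a b f = starsCode a b g := by
    rw [← orderEmbOfFin_starsSet hf.2.1]
    exact (orderEmbOfFin_unique _ (fun j => hfg ▸ mem_image_of_mem _ (mem_univ j))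
      (strictMono_starsCode hg.2.1)).symm
  funext x
  by_cases hx : x ∈ Set.Icc a b
  · have := congrFun hcode ⟨b - x, by grind⟩
    simp only [starsCode] at this
    rwa [Nat.sub_sub_self hx.2, Nat.add_right_cancel_iff] at this
  · rw [hf.1 x hx, hg.1 x hx]

lemma image_starsSet (hab : a ≤ b) : starsSet a b '' antitoneExtensions h a b c =
    ↑((Icc 1 (c + (b - a))).powersetCard (b - a + 1)) := by
  ext s
  simp only [Set.mem_image, mem_coe, mem_powersetCard]
  constructor
  · rintro ⟨f, ⟨-, hanti, hmaps⟩, rfl⟩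
    refine ⟨fun y hy => ?_, card_starsSet hanti⟩
    obtain ⟨j, -, rfl⟩ := mem_image.1 hy
    have := hmaps (x := b - j) ⟨by omega, by omega⟩
    simp only [starsCode, Set.mem_Icc, mem_Icc] at this ⊢
    omega
  · rintro ⟨hsub, hcard⟩
    set e := s.orderEmbOfFin hcard
    have hrange : ∀ j, 1 ≤ e j ∧ e j ≤ c + (b - a) := fun j =>
      mem_Icc.1 (hsub (s.orderEmbOfFin_mem hcard j))
    have hbound : ∀ j : Fin (b - a + 1), (j : ℕ) + 1 ≤ e j ∧ e j ≤ c + j := fun j => by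
      have h0 := Fin.add_sub_le_of_strictMono e.strictMono (Fin.zero_le j)
      have hlast := Fin.add_sub_le_of_strictMono e.strictMono (Fin.le_last j)
      simp only [Fin.val_zero, Fin.val_last] at h0 hlast
      have := hrange 0
      have := hrange (Fin.last _)
      omega
    let f : ℕ → ℕ := fun x =>
      if hx : x ∈ Set.Icc a b then e ⟨b - x, by grind⟩ - (b - x) else h x
    refine ⟨f, ⟨fun x hx => dif_neg hx, fun x hx y hy hxy => ?_, fun x hx => ?_⟩, ?_⟩
    · have hyx := Fin.add_sub_le_of_strictMono e.strictMono
        (show (⟨b - y, by grind⟩ : Fin (b - a + 1)) ≤ ⟨b - x, by grind⟩ from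
          Fin.mk_le_mk.2 (by omega))
      have := hbound ⟨b - y, by grind⟩
      dsimp only at hyx this
      simp only [f, dif_pos hx, dif_pos hy]
      omega
    · have := hbound ⟨b - x, by grind⟩
      dsimp only at this
      refine Set.mem_Icc.2 ?_
      simp only [f, dif_pos hx]
      omega
    · suffices starsCode a b f = e by rw [starsSet, this, image_orderEmbOfFin_univ]
      funext j
      have hj : b - j ∈ Set.Icc a b := ⟨by omega, by omega⟩
      have hjj : (⟨b - (b - j), by grind⟩ : Fin (b - a + 1)) = j :=
        Fin.ext (Nat.sub_sub_self (by omega))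
      have := hbound j
      simp only [starsCode, f, dif_pos hj, hjj]
      omega

theorem ncard_antitoneExtensions (hab : a ≤ b) :
    (antitoneExtensions h a b c).ncard = (c + (b - a)).choose (b - a + 1) := by
  rw [← injOn_starsSet.ncard_image, image_starsSet hab, Set.ncard_coe_finset, card_powersetCard,
    Nat.card_Icc, Nat.add_sub_cancel]

end StarsAndBars

lemma cyclic_iff {n : ℕ} {f : ℕ → ℕ} : Cyclic n f ↔
    ∀ i ∈ Icc 1 n, ∀ j ∈ Icc 1 n, nxt n f i < f i → nxt n f j < f j → i = j := by
  simp only [Cyclic, card_le_one, mem_filter, and_imp]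
  exact ⟨fun h i hi j hj hi' hj' => h i hi hi' j hj hj',
    fun h i hi hi' j hj hj' => h i hi j hj hi' hj'⟩

lemma antiCyclic_iff {n : ℕ} {f : ℕ → ℕ} : AntiCyclic n f ↔
    ∀ i ∈ Icc 1 n, ∀ j ∈ Icc 1 n, f i < nxt n f i → f j < nxt n f j → i = j := by
  simp only [AntiCyclic, card_le_one, mem_filter, and_imp]
  exact ⟨fun h i hi j hj hi' hj' => h i hi hi' j hj hj',
    fun h i hi hi' j hj hj' => h i hi j hj hi' hj'⟩

lemma exists_succ_lt_of_lt {f : ℕ → ℕ} {a b : ℕ} (hab : a ≤ b) (h : f b < f a) :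
    ∃ i, a ≤ i ∧ i < b ∧ f (i + 1) < f i := by
  by_contra! H
  have : MonotoneOn f (Set.Icc a b) := monotoneOn_of_le_succ Set.ordConnected_Icc
    fun i _ hi hi' => by
      rw [Order.succ_eq_add_one] at hi' ⊢
      exact H i hi.1 (by grind)
  exact absurd (this ⟨le_rfl, hab⟩ ⟨hab, le_rfl⟩ hab) (not_le.2 h)

def constOne (n : ℕ) : ℕ → ℕ := fun x => if 1 ≤ x ∧ x ≤ n then 1 else x

def stepMap (n m v k : ℕ) : ℕ → ℕ := fun x =>
  if m ≤ x ∧ x ≤ k then v else constOne n x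

def stepMaps (n m : ℕ) : Set (ℕ → ℕ) :=
  (fun p : ℕ × ℕ => stepMap n m p.1 p.2) '' ↑(Icc 2 m ×ˢ Icc m n)

section

variable {n m : ℕ} {f : ℕ → ℕ}

lemma ordDeg_eq_iff (hm : 1 ≤ m) (hmn : m ≤ n) :
    ordDeg n f = m ↔ (∀ x, 1 ≤ x → x < m → f x = 1) ∧ f m ≠ 1 := by
  rw [ordDeg]
  constructor
  · intro hdeg
    have hne : {x | 1 ≤ x ∧ x ≤ n ∧ f x ≠ 1}.Nonempty := by
      by_contra hempty
      rw [Set.not_nonempty_iff_eq_empty] at hempty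
      rw [hempty, Nat.sInf_empty] at hdeg
      omega
    refine ⟨fun x hx hxm => ?_, (hdeg ▸ Nat.sInf_mem hne).2.2⟩
    by_contra hfx
    have hmem : x ∈ {x | 1 ≤ x ∧ x ≤ n ∧ f x ≠ 1} := ⟨hx, by omega, hfx⟩
    have := Nat.sInf_le hmem
    omega
  · rintro ⟨hone, hfm⟩
    have hmem : m ∈ {x | 1 ≤ x ∧ x ≤ n ∧ f x ≠ 1} := ⟨hm, hmn, hfm⟩
    refine le_antisymm (Nat.sInf_le hmem) (le_csInf ⟨m, hmem⟩ ?_)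
    rintro x ⟨hx, -, hfx⟩
    by_contra! hxm
    exact hfx (hone x hx hxm)

lemma antiCyclic_iff_antitoneOn (hm : 2 ≤ m) (hmn : m ≤ n)
    (hone : ∀ x, 1 ≤ x → x < m → f x = 1) (hfm : 1 < f m) (hpos : 1 ≤ f n) :
    AntiCyclic n f ↔ AntitoneOn f (Set.Icc m n) := by
  have hnxt : ∀ i, i < n → nxt n f i = f (i + 1) := fun i hi => if_neg hi.ne
  rw [antiCyclic_iff]
  constructor
  · -- `m - 1` is an ascent, so there is no other one
    intro hasc
    have hm1 : f (m - 1) < nxt n f (m - 1) := by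
      rw [hnxt _ (by omega), hone _ (by omega) (by omega), Nat.sub_add_cancel (by omega)]
      exact hfm
    refine antitoneOn_of_succ_le Set.ordConnected_Icc fun i _ hi hi' => ?_
    rw [Order.succ_eq_add_one] at hi' ⊢
    by_contra! hlt
    have := hasc i (by grind) (m - 1) (by grind) (by rwa [hnxt i (by grind)]) hm1
    grind
  · intro hanti
    suffices ∀ i ∈ Icc 1 n, f i < nxt n f i → i = m - 1 from
      fun i hi j hj hfi hfj => (this i hi hfi).trans (this j hj hfj).symm
    intro i hi hfi
    rw [mem_Icc] at hi
    rcases hi.2.lt_or_eq with hin | rfl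
    · rw [hnxt i hin] at hfi
      by_contra hne
      rcases lt_or_gt_of_ne hne with hlt | hgt
      · rw [hone i hi.1 (by omega), hone (i + 1) (by omega) (by omega)] at hfi
        exact lt_irrefl _ hfi
      · exact absurd (hanti ⟨by omega, by omega⟩ ⟨by omega, by omega⟩ (Nat.le_succ i))
          (not_le.2 hfi)
    · rw [nxt, if_pos rfl, hone 1 le_rfl (by omega)] at hfi
      omega

lemma mem_rdstar_and_ordDeg_eq_iff (hm : 2 ≤ m) (hmn : m ≤ n) :
    f ∈ RDstar n ∧ ordDeg n f = m ↔
      f ∈ antitoneExtensions (constOne n) m n m ∧ f m ≠ 1 ∧ ¬ Cyclic n f := by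
  constructor
  · rintro ⟨⟨⟨⟨hbound, hout⟩, hdec⟩, hanti, hncyc⟩, hdeg⟩
    obtain ⟨hone, hfm⟩ := (ordDeg_eq_iff (by omega) hmn).1 hdeg
    have hfm' : 1 < f m := by have := hbound m (by omega) hmn; omega
    have hantiOn := (antiCyclic_iff_antitoneOn hm hmn hone hfm'
      (hbound n (by omega) le_rfl).1).1 hanti
    refine ⟨⟨fun x hx => ?_, hantiOn, fun x hx => ?_⟩, hfm, hncyc⟩
    · rw [Set.mem_Icc] at hx
      by_cases hxn : 1 ≤ x ∧ x ≤ n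
      · rw [constOne, if_pos hxn, hone x hxn.1 (by omega)]
      · rw [constOne, if_neg hxn, hout x hxn]
    · have := hantiOn ⟨le_rfl, hmn⟩ hx hx.1
      have := hdec m (by omega) hmn
      have := hbound x (by grind) hx.2
      exact ⟨by omega, by omega⟩
  · rintro ⟨⟨hout, hantiOn, hmaps⟩, hfm, hncyc⟩
    have hone : ∀ x, 1 ≤ x → x < m → f x = 1 := fun x hx hxm => by
      rw [hout x (by grind), constOne, if_pos (by omega)]
    have hbelow : ∀ x, 1 ≤ x → x ≤ n → 1 ≤ f x ∧ f x ≤ x := fun x hx hxn => by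
      by_cases hxm : x < m
      · rw [hone x hx hxm]; omega
      · have := hmaps (x := x) ⟨by omega, hxn⟩; grind
    refine ⟨⟨⟨⟨fun x hx hxn => ⟨(hbelow x hx hxn).1, by grind⟩, fun x hx => ?_⟩,
      fun x hx hxn => (hbelow x hx hxn).2⟩, ?_, hncyc⟩,
      (ordDeg_eq_iff (by omega) hmn).2 ⟨hone, hfm⟩⟩
    · rw [hout x (by grind), constOne, if_neg hx]
    · have hfm' : 1 < f m := by have := (hbelow m (by omega) hmn).1; omega
      exact (antiCyclic_iff_antitoneOn hm hmn hone hfm' (hbelow n (by omega) le_rfl).1).2 hantiOn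

lemma constOne_mem_antitoneExtensions (hm : 1 ≤ m) :
    constOne n ∈ antitoneExtensions (constOne n) m n m := by
  refine ⟨fun _ _ => rfl, fun x hx y hy _ => ?_, fun x hx => ?_⟩ <;>
    simp only [constOne, Set.mem_Icc] at * <;> grind

lemma apply_eq_one_iff_eq_constOne (hm : 1 ≤ m) (hmn : m ≤ n)
    (hf : f ∈ antitoneExtensions (constOne n) m n m) : f m = 1 ↔ f = constOne n := by
  obtain ⟨hout, hanti, hmaps⟩ := hf
  refine ⟨fun hfm => funext fun x => ?_, fun h => by rw [h, constOne, if_pos ⟨hm, hmn⟩]⟩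
  by_cases hx : x ∈ Set.Icc m n
  · have := hanti ⟨le_rfl, hmn⟩ hx hx.1
    have := hmaps hx
    rw [constOne, if_pos ⟨by grind, hx.2⟩]
    grind
  · exact hout x hx

lemma stepMap_mem_antitoneExtensions {v k : ℕ} (hv : 1 ≤ v) (hvm : v ≤ m) (hkn : k ≤ n) :
    stepMap n m v k ∈ antitoneExtensions (constOne n) m n m := by
  refine ⟨fun x hx => ?_, fun x hx y hy hxy => ?_, fun x hx => ?_⟩ <;>
    simp only [stepMap, constOne, Set.mem_Icc] at * <;> grind

lemma cyclic_stepMap {v k : ℕ} (hm : 2 ≤ m) (hv : 1 ≤ v) (hkn : k ≤ n) :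
    Cyclic n (stepMap n m v k) := by
  suffices ∀ i ∈ Icc 1 n, nxt n (stepMap n m v k) i < stepMap n m v k i → i = k from
    cyclic_iff.2 fun i hi j hj hfi hfj => (this i hi hfi).trans (this j hj hfj).symm
  intro i hi hdesc
  simp only [nxt, stepMap, constOne, mem_Icc] at hi hdesc
  split_ifs at hdesc <;> omega

lemma ncard_stepMaps : (stepMaps n m).ncard = (m - 1) * (n + 1 - m) := by
  have hinj : Set.InjOn (fun p : ℕ × ℕ => stepMap n m p.1 p.2) ↑(Icc 2 m ×ˢ Icc m n) := by
    rintro ⟨v, k⟩ hp ⟨v', k'⟩ hq heq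
    simp only [coe_product, coe_Icc, Set.mem_prod, Set.mem_Icc] at hp hq
    have hatm := congrFun heq m
    have hatk := congrFun heq k
    have hatk' := congrFun heq k'
    simp only [stepMap, constOne] at hatm hatk hatk'
    ext <;> dsimp only <;> split_ifs at hatm hatk hatk' <;> omega
  rw [stepMaps, hinj.ncard_image, Set.ncard_coe_finset, card_product, Nat.card_Icc, Nat.card_Icc,
    show m + 1 - 2 = m - 1 by omega]

lemma stepMaps_subset (hmn : m ≤ n) :
    stepMaps n m ⊆ antitoneExtensions (constOne n) m n m \ {constOne n} := by
  rw [stepMaps, Set.image_subset_iff]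
  rintro ⟨v, k⟩ hp
  simp only [coe_product, coe_Icc, Set.mem_prod, Set.mem_Icc] at hp
  have hmem := stepMap_mem_antitoneExtensions (by omega) hp.1.2 hp.2.2
  refine ⟨hmem, fun h => ?_⟩
  have := (apply_eq_one_iff_eq_constOne (by omega) hmn hmem).2 h
  rw [stepMap, if_pos ⟨le_rfl, hp.2.1⟩] at this
  omega

lemma apply_eq_one_or_apply_eq_of_cyclic (hm : 2 ≤ m)
    (hf : f ∈ antitoneExtensions (constOne n) m n m) (hc : Cyclic n f) {x : ℕ}
    (hx : x ∈ Set.Icc m n) : f x = 1 ∨ f x = f m := by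
  obtain ⟨hout, hanti, hmaps⟩ := hf
  have hf1 : f 1 = 1 := by rw [hout 1 (by grind), constOne, if_pos ⟨le_rfl, by grind⟩]
  by_contra! hne
  have hlt : f x < f m := lt_of_le_of_ne (hanti ⟨le_rfl, hx.1.trans hx.2⟩ hx hx.1) hne.2
  obtain ⟨i, hmi, hix, hi⟩ := exists_succ_lt_of_lt hx.1 hlt
  -- a second descent: at `n` if `f n ≠ 1`, otherwise between `x` and `n`
  obtain ⟨j, hj, hxj, hj'⟩ : ∃ j ∈ Icc 1 n, x ≤ j ∧ nxt n f j < f j := by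
    by_cases hfn : f n = 1
    · have := hmaps hx
      obtain ⟨j, hxj, hjn, hj⟩ := exists_succ_lt_of_lt (f := f) hx.2 (by grind)
      exact ⟨j, mem_Icc.2 ⟨by grind, by omega⟩, hxj, by rwa [nxt, if_neg (by omega)]⟩
    · have := hmaps (x := n) ⟨hx.1.trans hx.2, le_rfl⟩
      exact ⟨n, mem_Icc.2 ⟨by grind, le_rfl⟩, hx.2, by rw [nxt, if_pos rfl, hf1]; grind⟩
  have := cyclic_iff.1 hc i (mem_Icc.2 ⟨by omega, by grind⟩) j hj
    (by rwa [nxt, if_neg (by grind)]) hj'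
  omega

lemma eq_stepMap_of_cyclic (hm : 2 ≤ m) (hmn : m ≤ n)
    (hf : f ∈ antitoneExtensions (constOne n) m n m) (hc : Cyclic n f) :
    f = stepMap n m (f m) (Nat.findGreatest (fun x => f x = f m) n) := by
  set k := Nat.findGreatest (fun x => f x = f m) n
  have hkm : m ≤ k := Nat.le_findGreatest hmn rfl
  have hkn : k ≤ n := Nat.findGreatest_le n
  have hfk : f k = f m := Nat.findGreatest_spec (P := fun x => f x = f m) hmn rfl
  funext x
  rw [stepMap]
  split_ifs with hxk
  · have := hf.2.1 ⟨le_rfl, hmn⟩ ⟨hxk.1, hxk.2.trans hkn⟩ hxk.1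
    have := hf.2.1 ⟨hxk.1, hxk.2.trans hkn⟩ ⟨hkm, hkn⟩ hxk.2
    omega
  · by_cases hx : x ∈ Set.Icc m n
    · have hgt : k < x := by grind
      rw [constOne, if_pos ⟨by grind, hx.2⟩]
      exact (apply_eq_one_or_apply_eq_of_cyclic hm hf hc hx).resolve_right
        (Nat.findGreatest_is_greatest (P := fun x => f x = f m) hgt hx.2)
    · exact hf.1 x hx

lemma cyclic_iff_mem_stepMaps (hm : 2 ≤ m) (hmn : m ≤ n)
    (hf : f ∈ antitoneExtensions (constOne n) m n m) (hfm : f m ≠ 1) :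
    Cyclic n f ↔ f ∈ stepMaps n m := by
  refine ⟨fun hc => ⟨(f m, Nat.findGreatest (fun x => f x = f m) n), ?_,
    (eq_stepMap_of_cyclic hm hmn hf hc).symm⟩, ?_⟩
  · have := hf.2.2 (x := m) ⟨le_rfl, hmn⟩
    simp only [coe_product, coe_Icc, Set.mem_prod, Set.mem_Icc] at this ⊢
    exact ⟨⟨by omega, this.2⟩, Nat.le_findGreatest hmn rfl, Nat.findGreatest_le n⟩
  · rintro ⟨⟨v, k⟩, hp, rfl⟩
    simp only [coe_product, coe_Icc, Set.mem_prod, Set.mem_Icc] at hp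
    exact cyclic_stepMap hm (by omega) hp.2.2

lemma rdstar_ordDeg_eq (hm : 2 ≤ m) (hmn : m ≤ n) :
    {f | f ∈ RDstar n ∧ ordDeg n f = m} =
      (antitoneExtensions (constOne n) m n m \ {constOne n}) \ stepMaps n m := by
  ext f
  simp only [Set.mem_ofPred_eq, mem_rdstar_and_ordDeg_eq_iff hm hmn, Set.mem_sdiff,
    Set.mem_singleton_iff, and_assoc]
  refine and_congr_right fun hf => ?_
  rw [← apply_eq_one_iff_eq_constOne (by omega) hmn hf]
  exact and_congr_right fun hfm => (cyclic_iff_mem_stepMaps hm hmn hf hfm).not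

end

theorem card_rdstar_degree_general (n m : ℕ) (hm3 : 3 ≤ m) (hm : m ≤ n - 1) :
    {f | f ∈ RDstar n ∧ ordDeg n f = m}.ncard
      = Nat.choose n (m - 1) - m - (m - 1) * (n - m) := by
  have hm2 : 2 ≤ m := by omega
  have hmn : m ≤ n := by omega
  have hfin : (stepMaps n m).Finite := (finite_toSet _).image _
  rw [rdstar_ordDeg_eq hm2 hmn, Set.ncard_sdiff (stepMaps_subset hmn) hfin,
    Set.ncard_sdiff_singleton_of_mem (constOne_mem_antitoneExtensions (by omega)),
    ncard_antitoneExtensions hmn, ncard_stepMaps, Nat.add_sub_cancel' hmn,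
    Nat.choose_symm_of_eq_add (by omega : n = (n - m + 1) + (m - 1)),
    show n + 1 - m = n - m + 1 by omega, Nat.mul_succ]
  generalize (m - 1) * (n - m) = t
  omega

theorem card_rdstar_degree (n m : ℕ) (hn : 4 ≤ n) (hm3 : 3 ≤ m) (hm : m ≤ n - 1) :
    {f | f ∈ RDstar n ∧ ordDeg n f = m}.ncard
      = Nat.choose n (m - 1) - m - (m - 1) * (n - m) :=
  card_rdstar_degree_general n m hm3 hm

end ORDPaper
end

section
/- For n ≥ 5, |N(RD*_n)| = |RD*_{n−1}|, where N(RD*_n) = {α ∈ RD*_n : fix(α) = {1}}. -/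
open Finset

namespace ORDPaper

/-- The map from nilpotents of `RD*_n` to `RD*_{n-1}`: shift left by one. -/
def phi (n : ℕ) (g : ℕ → ℕ) : ℕ → ℕ := fun x =>
  if 1 ≤ x ∧ x ≤ n - 1 then g (x + 1) else x

/-- Inverse map. -/
def psi (n : ℕ) (f : ℕ → ℕ) : ℕ → ℕ := fun x =>
  if 1 ≤ x ∧ x ≤ n then (if x = 1 then 1 else f (x - 1)) else x

lemma nxt_shift (n : ℕ) (hn : 2 ≤ n) (g f : ℕ → ℕ)
    (hg1 : g 1 = 1) (hg2 : g 2 = 1)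
    (hf : ∀ i, 1 ≤ i → i ≤ n - 1 → f i = g (i + 1)) :
    ∀ i, 1 ≤ i → i ≤ n - 1 → f i = g (i + 1) ∧ nxt (n - 1) f i = nxt n g (i + 1) := by
  intro i h1 h2
  refine ⟨hf i h1 h2, ?_⟩
  unfold nxt
  by_cases h : i = n - 1
  · subst h
    rw [if_pos rfl, if_pos (show n - 1 + 1 = n by omega), hf 1 le_rfl (by omega), hg2, hg1]
  · rw [if_neg h, if_neg (show ¬ i + 1 = n by omega)]
    exact hf (i + 1) (by omega) (by omega)

lemma filter_shift (n : ℕ) (hn : 2 ≤ n) (g f : ℕ → ℕ)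
    (P : ℕ → ℕ → Prop) [∀ a b : ℕ, Decidable (P a b)]
    (hP : ¬ P 1 1) (hg1 : g 1 = 1) (hg2 : g 2 = 1)
    (hf : ∀ i, 1 ≤ i → i ≤ n - 1 → f i = g (i + 1)) :
    ((Finset.Icc 1 n).filter (fun i => P (g i) (nxt n g i))).card
      = ((Finset.Icc 1 (n - 1)).filter (fun i => P (f i) (nxt (n - 1) f i))).card := by
  have key := nxt_shift n hn g f hg1 hg2 hf
  have hset : ((Finset.Icc 1 n).filter (fun i => P (g i) (nxt n g i)))
      = ((Finset.Icc 1 (n - 1)).filter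
          (fun i => P (f i) (nxt (n - 1) f i))).image (· + 1) := by
    ext j
    simp only [Finset.mem_filter, Finset.mem_Icc, Finset.mem_image]
    constructor
    · rintro ⟨⟨hj1, hj2⟩, hPj⟩
      have hj1' : 2 ≤ j := by
        by_contra h
        have hj : j = 1 := by omega
        subst hj
        have hnxt : nxt n g 1 = g 2 := by
          unfold nxt; rw [if_neg (by omega)]
        rw [hg1, hnxt, hg2] at hPj
        exact hP hPj
      refine ⟨j - 1, ⟨⟨by omega, by omega⟩, ?_⟩, by omega⟩
      obtain ⟨e1, e2⟩ := key (j - 1) (by omega) (by omega)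
      rw [e1, e2, show j - 1 + 1 = j from by omega]
      exact hPj
    · rintro ⟨i, ⟨⟨hi1, hi2⟩, hPi⟩, rfl⟩
      obtain ⟨e1, e2⟩ := key i hi1 hi2
      exact ⟨⟨by omega, by omega⟩, by rw [← e1, ← e2]; exact hPi⟩
  rw [hset, Finset.card_image_of_injective _ (add_left_injective 1)]

lemma filter_shift_desc (n : ℕ) (hn : 2 ≤ n) (g f : ℕ → ℕ)
    (hg1 : g 1 = 1) (hg2 : g 2 = 1)
    (hf : ∀ i, 1 ≤ i → i ≤ n - 1 → f i = g (i + 1)) :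
    ((Finset.Icc 1 n).filter (fun i => nxt n g i < g i)).card
      = ((Finset.Icc 1 (n - 1)).filter (fun i => nxt (n - 1) f i < f i)).card :=
  filter_shift n hn g f (fun a b => b < a) (by omega) hg1 hg2 hf

lemma filter_shift_asc (n : ℕ) (hn : 2 ≤ n) (g f : ℕ → ℕ)
    (hg1 : g 1 = 1) (hg2 : g 2 = 1)
    (hf : ∀ i, 1 ≤ i → i ≤ n - 1 → f i = g (i + 1)) :
    ((Finset.Icc 1 n).filter (fun i => g i < nxt n g i)).card
      = ((Finset.Icc 1 (n - 1)).filter (fun i => f i < nxt (n - 1) f i)).card :=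
  filter_shift n hn g f (fun a b => a < b) (by omega) hg1 hg2 hf

theorem card_nilpotent_rdstar (n : ℕ) (hn : 5 ≤ n) :
    {f | f ∈ RDstar n ∧ fixSet n f = {1}}.ncard = (RDstar (n - 1)).ncard := by
  classical
  have hn2 : 2 ≤ n := by omega
  -- basic facts about members of the nilpotent set
  have memA : ∀ g ∈ {f | f ∈ RDstar n ∧ fixSet n f = {1}},
      g 1 = 1 ∧ (∀ x, 2 ≤ x → x ≤ n → 1 ≤ g x ∧ g x < x)
        ∧ (∀ x, ¬(1 ≤ x ∧ x ≤ n) → g x = x) := by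
    rintro g ⟨⟨⟨⟨htr, hout⟩, hdec⟩, _, _⟩, hfix⟩
    have h1 : g 1 = 1 :=
      le_antisymm (hdec 1 le_rfl (by omega)) (htr 1 le_rfl (by omega)).1
    refine ⟨h1, ?_, hout⟩
    intro x hx2 hxn
    have hle := hdec x (by omega) hxn
    have hge := (htr x (by omega) hxn).1
    refine ⟨hge, lt_of_le_of_ne hle ?_⟩
    intro heq
    have hx : x ∈ fixSet n g :=
      Finset.mem_filter.mpr ⟨Finset.mem_Icc.mpr ⟨by omega, hxn⟩, heq⟩
    rw [hfix, Finset.mem_singleton] at hx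
    omega
  have hinj : Set.InjOn (phi n) {f | f ∈ RDstar n ∧ fixSet n f = {1}} := by
    intro g1 hg1 g2 hg2 heq
    obtain ⟨h11, h1r, h1o⟩ := memA g1 hg1
    obtain ⟨h21, h2r, h2o⟩ := memA g2 hg2
    funext x
    by_cases hx : 1 ≤ x ∧ x ≤ n
    · rcases (show x = 1 ∨ 2 ≤ x by omega) with h | h
      · rw [h, h11, h21]
      · have hc := congrFun heq (x - 1)
        simp only [phi] at hc
        rw [if_pos ⟨by omega, by omega⟩, if_pos ⟨by omega, by omega⟩] at hc
        rwa [show x - 1 + 1 = x from by omega] at hc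
    · rw [h1o x hx, h2o x hx]
  have himg : phi n '' {f | f ∈ RDstar n ∧ fixSet n f = {1}} = RDstar (n - 1) := by
    apply Set.Subset.antisymm
    · rintro f ⟨g, hg, rfl⟩
      obtain ⟨h1, hr, ho⟩ := memA g hg
      obtain ⟨⟨⟨htr, hdec⟩, hac, hnc⟩, hfix⟩ := hg
      have hg2 : g 2 = 1 := by have := hr 2 le_rfl (by omega); omega
      have hf : ∀ i, 1 ≤ i → i ≤ n - 1 → phi n g i = g (i + 1) := by
        intro i hi1 hi2
        simp only [phi]
        rw [if_pos ⟨hi1, hi2⟩]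
      have hd := filter_shift_desc n hn2 g (phi n g) h1 hg2 hf
      have ha := filter_shift_asc n hn2 g (phi n g) h1 hg2 hf
      refine ⟨⟨⟨?_, ?_⟩, ?_⟩, ?_, ?_⟩
      · intro x hx1 hx2
        rw [hf x hx1 hx2]
        have := hr (x + 1) (by omega) (by omega)
        omega
      · intro x hx
        simp only [phi]
        rw [if_neg hx]
      · intro x hx1 hx2
        rw [hf x hx1 hx2]
        have := hr (x + 1) (by omega) (by omega)
        omega
      · unfold AntiCyclic at hac ⊢
        omega
      · unfold Cyclic at hnc ⊢
        omega
    · intro f hf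
      obtain ⟨⟨⟨htr, hout⟩, hdec⟩, hac, hnc⟩ := hf
      have hf1 : f 1 = 1 :=
        le_antisymm (hdec 1 le_rfl (by omega)) (htr 1 le_rfl (by omega)).1
      have hgval : ∀ x, 2 ≤ x → x ≤ n → psi n f x = f (x - 1) := by
        intro x h2 hxn
        simp only [psi]
        rw [if_pos ⟨by omega, hxn⟩, if_neg (by omega)]
      have hg1 : psi n f 1 = 1 := by
        have h1n : (1 : ℕ) ≤ n := by omega
        simp [psi, h1n]
      have hg2 : psi n f 2 = 1 := by
        rw [hgval 2 le_rfl (by omega)]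
        simpa using hf1
      have hfshift : ∀ i, 1 ≤ i → i ≤ n - 1 → f i = psi n f (i + 1) := by
        intro i hi1 hi2
        rw [hgval (i + 1) (by omega) (by omega)]
        simp
      have hd := filter_shift_desc n hn2 (psi n f) f hg1 hg2 hfshift
      have ha := filter_shift_asc n hn2 (psi n f) f hg1 hg2 hfshift
      refine ⟨psi n f, ⟨⟨⟨⟨?_, ?_⟩, ?_⟩, ?_, ?_⟩, ?_⟩, ?_⟩
      · intro x hx1 hx2
        rcases (show x = 1 ∨ 2 ≤ x by omega) with h | h
        · rw [h, hg1]; omega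
        · rw [hgval x h hx2]
          have := htr (x - 1) (by omega) (by omega)
          omega
      · intro x hx
        simp only [psi]
        rw [if_neg hx]
      · intro x hx1 hx2
        rcases (show x = 1 ∨ 2 ≤ x by omega) with h | h
        · rw [h, hg1]
        · rw [hgval x h hx2]
          have := hdec (x - 1) (by omega) (by omega)
          omega
      · unfold AntiCyclic at hac ⊢
        omega
      · unfold Cyclic at hnc ⊢
        omega
      · ext x
        simp only [fixSet, Finset.mem_filter, Finset.mem_Icc, Finset.mem_singleton]
        constructor
        · rintro ⟨⟨hx1, hx2⟩, hfx⟩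
          by_contra h
          have h2 : 2 ≤ x := by omega
          rw [hgval x h2 hx2] at hfx
          have := hdec (x - 1) (by omega) (by omega)
          omega
        · rintro rfl
          exact ⟨⟨le_rfl, by omega⟩, hg1⟩
      · funext x
        by_cases hx : 1 ≤ x ∧ x ≤ n - 1
        · simp only [phi]
          rw [if_pos hx, ← hfshift x hx.1 hx.2]
        · simp only [phi]
          rw [if_neg hx, hout x hx]
  rw [← himg, Set.ncard_image_of_injOn hinj]

end ORDPaper
end
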